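/- arXiv:1904.10720 — 13 statements merged into one kernel-verified Lean document; each statement's English description precedes it below -/
import Mathlib

section
/- For all nonnegative integers k₁,...,k_N, the generalized moment of the joint spectral measure equals a determinant: ∑_{σ∈S_N} ε(σ) ∏_{i=1}^N p_{iσ(i)} λ_{σ(i)}^{k_i} = det(A[k₁,...,k_N]), where A[k₁,...,k_N] denotes the N×N matrix whose i-th column is the i-th column of A^{k_i} (with the convention A⁰ = I). -/
open Matrix BigOperators

/-- Generalized moments of the joint spectral measure equal determinants of mixed-power
matrices: `∑_{σ∈S_N} ε(σ) ∏_i p_{iσ(i)} λ_{σ(i)}^{k_i} = det(A[k₁,...,k_N])`, where the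
`j`-th column of `A[k₁,...,k_N]` is the `j`-th column of `A^{k_j}`. -/
theorem generalized_moment_eq_det (N : ℕ)
    (A P : Matrix (Fin N) (Fin N) ℝ) (lam : Fin N → ℝ)
    (hsymm : A.IsSymm)
    (hdecomp : A = P * Matrix.diagonal lam * Pᵀ)
    (horth : P * Pᵀ = 1)
    (hdet : P.det = 1)
    (k : Fin N → ℕ) :
    ∑ σ : Equiv.Perm (Fin N),
        ((Equiv.Perm.sign σ : ℤ) : ℝ) *
          ∏ i : Fin N, P i (σ i) * lam (σ i) ^ (k i)
      = Matrix.det (Matrix.of fun i j : Fin N => (A ^ (k j)) i j) := by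
  have hPtP : Pᵀ * P = 1 := by
    rw [mul_eq_one_comm] at horth; exact horth
  have hpow : ∀ n : ℕ, A ^ n = P * Matrix.diagonal (fun m => lam m ^ n) * Pᵀ := by
    intro n
    induction n with
    | zero => simp [Matrix.diagonal_one, horth]
    | succ n ih =>
        rw [pow_succ, ih, hdecomp]
        simp only [Matrix.mul_assoc]
        rw [← Matrix.mul_assoc Pᵀ P, hPtP, Matrix.one_mul,
          ← Matrix.mul_assoc (Matrix.diagonal fun m => lam m ^ n),
          Matrix.diagonal_mul_diagonal]
        simp [pow_succ]
  -- C : rows indexed by i, C i m = P i m * lam m ^ k i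
  set C : Matrix (Fin N) (Fin N) ℝ := Matrix.of fun i m => P i m * lam m ^ k i with hC
  have hLHS : (∑ σ : Equiv.Perm (Fin N),
        ((Equiv.Perm.sign σ : ℤ) : ℝ) *
          ∏ i : Fin N, P i (σ i) * lam (σ i) ^ (k i)) = Cᵀ.det := by
    rw [Matrix.det_apply]
    apply Finset.sum_congr rfl
    intro σ _
    rw [Equiv.Perm.sign_eq_sign_of_equiv σ σ (Equiv.refl _) (fun _ => rfl)]
    simp [hC, Matrix.transpose_apply, Units.smul_def, zsmul_eq_mul]
  have hM : (Matrix.of fun i j : Fin N => (A ^ (k j)) i j) = (C * Pᵀ)ᵀ := by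
    ext i j
    simp only [Matrix.of_apply, Matrix.transpose_apply]
    rw [hpow (k j)]
    simp [Matrix.mul_apply, Matrix.diagonal_apply, Finset.mul_sum, hC]
    apply Finset.sum_congr rfl
    intro m _
    ring
  rw [hLHS, hM, Matrix.det_transpose, Matrix.det_transpose, Matrix.det_mul,
    Matrix.det_transpose, hdet, mul_one]
end

section
/- For every index i ∈ {1,...,N} and every nonnegative integer k, ∑_{σ∈S_N} ε(σ) λ_{σ(i)}^{k} ∏_{j=1}^N p_{jσ(j)} = (A^k)_{ii}; that is, the i-th marginal of the joint spectral measure is the spectral measure of A at vertex i, whose k-th moment is the (i,i) entry of A^k. -/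
open Matrix BigOperators

/-!
Expanding the determinant of `Pᵀ` along the permutations shows that the left-hand side is
`det Pᵀ` with its `i`-th column `(P i r)ᵣ` replaced by `(λᵣᵏ P i r)ᵣ`. By Cramer's rule this is
the `i`-th entry of `adj(Pᵀ) (λᵣᵏ P i r)ᵣ`, and for a special orthogonal `P` the adjugate of `Pᵀ`
is `P` itself, which leaves `∑ᵣ P i r λᵣᵏ P i r = (P Λᵏ Pᵀ)ᵢᵢ = (Aᵏ)ᵢᵢ`.
-/

namespace Matrix

variable {n R : Type*} [Fintype n] [DecidableEq n] [CommRing R]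

theorem det_updateCol_mul_col (M : Matrix n n R) (c : n → R) (i : n) :
    (M.updateCol i fun r => c r * M r i).det
      = ∑ σ : Equiv.Perm n, ((Equiv.Perm.sign σ : ℤ) : R) * c (σ i) * ∏ j, M (σ j) j := by
  rw [det_apply']
  refine Finset.sum_congr rfl fun σ _ => ?_
  have hcol : ∀ j, updateCol M i (fun r => c r * M r i) (σ j) j
      = (if j = i then c (σ j) else 1) * M (σ j) j := by
    intro j
    by_cases hj : j = i
    · subst hj; simp
    · simp [hj]
  simp only [hcol, Finset.prod_mul_distrib, Finset.prod_ite_eq', Finset.mem_univ, if_true]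
  ring

theorem adjugate_eq_det_smul_of_mul_eq_one {A B : Matrix n n R} (h : B * A = 1) :
    adjugate A = A.det • B :=
  calc adjugate A = B * (A * adjugate A) := by rw [← Matrix.mul_assoc, h, Matrix.one_mul]
    _ = A.det • B := by rw [mul_adjugate, Matrix.mul_smul, Matrix.mul_one]

theorem adjugate_transpose_of_mul_transpose_eq_one {P : Matrix n n R}
    (horth : P * Pᵀ = 1) (hdet : P.det = 1) : adjugate Pᵀ = P := by
  rw [adjugate_eq_det_smul_of_mul_eq_one horth, det_transpose, hdet, one_smul]

end Matrix

theorem marginal_moment_eq_diag_entry_general (N : ℕ)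
    (A P : Matrix (Fin N) (Fin N) ℝ) (lam : Fin N → ℝ)
    (hdecomp : A = P * Matrix.diagonal lam * Pᵀ)
    (horth : P * Pᵀ = 1)
    (hdet : P.det = 1)
    (i : Fin N) (k : ℕ) :
    ∑ σ : Equiv.Perm (Fin N),
        ((Equiv.Perm.sign σ : ℤ) : ℝ) * lam (σ i) ^ k * ∏ j : Fin N, P j (σ j)
      = (A ^ k) i i := by
  set b : Fin N → ℝ := fun r => lam r ^ k * P i r
  let U : (Matrix (Fin N) (Fin N) ℝ)ˣ := ⟨P, Pᵀ, horth, mul_eq_one_comm.mp horth⟩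
  calc _ = (Pᵀ.updateCol i b).det := (det_updateCol_mul_col Pᵀ (lam · ^ k) i).symm
    _ = (Pᵀ.adjugate *ᵥ b) i := by rw [← cramer_apply, cramer_eq_adjugate_mulVec]
    _ = (P *ᵥ b) i := by rw [adjugate_transpose_of_mul_transpose_eq_one horth hdet]
    _ = (P * diagonal (lam · ^ k) * Pᵀ) i i := by
      simp only [b, mulVec, dotProduct, mul_apply, diagonal_apply, transpose_apply, mul_ite,
        mul_zero, Finset.sum_ite_eq', Finset.mem_univ, if_true]
      exact Finset.sum_congr rfl fun r _ => by ring
    _ = (A ^ k) i i := by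
      rw [hdecomp, show P * diagonal lam * Pᵀ = U * diagonal lam * ↑U⁻¹ from rfl,
        Units.conj_pow, diagonal_pow]
      rfl

/-- The `i`-th marginal of the joint spectral measure is the spectral measure of `A` at
vertex `i`: its `k`-th moment is `(A^k)_{ii}`. -/
theorem marginal_moment_eq_diag_entry (N : ℕ)
    (A P : Matrix (Fin N) (Fin N) ℝ) (lam : Fin N → ℝ)
    (hsymm : A.IsSymm)
    (hdecomp : A = P * Matrix.diagonal lam * Pᵀ)
    (horth : P * Pᵀ = 1)
    (hdet : P.det = 1)
    (i : Fin N) (k : ℕ) :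
    ∑ σ : Equiv.Perm (Fin N),
        ((Equiv.Perm.sign σ : ℤ) : ℝ) * lam (σ i) ^ k * ∏ j : Fin N, P j (σ j)
      = (A ^ k) i i :=
  marginal_moment_eq_diag_entry_general N A P lam hdecomp horth hdet i k
end

section
/- For all distinct indices i ≠ j in {1,...,N} and every nonnegative integer k, the covariance of X_i^k and X_j^k under the joint spectral measure equals minus the squared (i,j) entry of A^k: ∑_{σ∈S_N} ε(σ) λ_{σ(i)}^{k} λ_{σ(j)}^{k} ∏_{l=1}^N p_{lσ(l)} − (A^k)_{ii}(A^k)_{jj} = −((A^k)_{ij})². -/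
/-!
The permutation sum is the determinant of the matrix `M` obtained from `P` by replacing its rows
`i` and `j` with those of `P Λᵏ`. Since `det Pᵀ = 1`, it equals `det (M Pᵀ)`, and `M Pᵀ` is the
identity with rows `i` and `j` replaced by those of `Aᵏ = P Λᵏ Pᵀ`. That determinant is the
principal `2 × 2` minor `(Aᵏ)ᵢᵢ (Aᵏ)ⱼⱼ - (Aᵏ)ᵢⱼ (Aᵏ)ⱼᵢ`, and `Aᵏ` is symmetric.
-/

open Matrix

namespace Matrix

def rowPiecewise {m n α : Type*} [DecidableEq m] (s : Finset m) (X Y : Matrix m n α) :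
    Matrix m n α :=
  of fun l => if l ∈ s then X l else Y l

section

variable {m n p R : Type*} [DecidableEq m]

theorem rowPiecewise_mul [Fintype n] [NonUnitalNonAssocSemiring R] (s : Finset m)
    (X Y : Matrix m n R) (Z : Matrix n p R) :
    rowPiecewise s X Y * Z = rowPiecewise s (X * Z) (Y * Z) := by
  ext l a
  by_cases hl : l ∈ s <;> simp [rowPiecewise, hl, mul_apply]

variable [Fintype m] [CommRing R]

theorem det_rowPiecewise_mul_diagonal (s : Finset m) (P : Matrix m m R) (w : m → R) :
    (rowPiecewise s (P * diagonal w) P).det =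
      ∑ σ : Equiv.Perm m, ((Equiv.Perm.sign σ : ℤ) : R) * (∏ l ∈ s, w (σ l)) *
        ∏ l, P l (σ l) := by
  rw [← det_transpose, det_apply']
  refine Finset.sum_congr rfl fun σ _ => ?_
  have hentry : ∀ l, rowPiecewise s (P * diagonal w) P l (σ l) =
      P l (σ l) * if l ∈ s then w (σ l) else 1 := fun l => by
    by_cases hl : l ∈ s <;> simp [rowPiecewise, hl]
  simp only [transpose_apply, hentry, Finset.prod_mul_distrib, Finset.prod_ite_mem,
    Finset.univ_inter]
  ring

theorem pow_conj_of_mul_transpose_eq_one {P : Matrix m m R} (hP : P * Pᵀ = 1)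
    (B : Matrix m m R) (k : ℕ) : (P * B * Pᵀ) ^ k = P * B ^ k * Pᵀ :=
  Units.conj_pow ⟨P, Pᵀ, hP, mul_eq_one_comm.mp hP⟩ B k

/-- `B = 1 + U * X`, where the columns of `U` are the columns of `1` indexed by `r`, so the
Weinstein–Aronszajn identity `det (1 + U * X) = det (1 + X * U)` applies. -/
theorem det_eq_det_submatrix_of_row_eq_one {ι : Type*} [Fintype ι] [DecidableEq ι]
    {B : Matrix m m R} {r : ι → m} (hr : Function.Injective r)
    (hB : ∀ l ∉ Set.range r, B l = (1 : Matrix m m R) l) :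
    B.det = (B.submatrix r r).det := by
  set U : Matrix m ι R := (1 : Matrix m m R).submatrix id r
  set X : Matrix ι m R := (B - 1).submatrix r id
  have hB' : B = 1 + U * X := by
    ext l a
    by_cases hl : l ∈ Set.range r
    · obtain ⟨b, rfl⟩ := hl
      simp [X, U, mul_apply, one_apply, hr.eq_iff]
    · simp only [X, U, add_apply, mul_apply, submatrix_apply, id_eq, one_apply, hB l hl]
      simpa using Finset.sum_eq_zero fun b _ => if_neg fun h => hl ⟨b, h.symm⟩
  have hXU : X * U = (B - 1).submatrix r r := by
    ext a b
    simp [X, U, mul_apply, one_apply]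
  rw [hB', det_one_add_mul_comm, hXU, ← hB']
  congr 1
  ext a b
  simp [hr.eq_iff, one_apply]

end

end Matrix

/-- Under the joint spectral measure, `cov(X_i^k, X_j^k) = -((A^k)_{ij})²` for `i ≠ j`. -/
theorem cov_powers_eq_neg_sq_entry (N : ℕ)
    (A P : Matrix (Fin N) (Fin N) ℝ) (lam : Fin N → ℝ)
    (hsymm : A.IsSymm)
    (hdecomp : A = P * Matrix.diagonal lam * Pᵀ)
    (horth : P * Pᵀ = 1)
    (hdet : P.det = 1)
    (i j : Fin N) (hij : i ≠ j) (k : ℕ) :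
    (∑ σ : Equiv.Perm (Fin N),
        ((Equiv.Perm.sign σ : ℤ) : ℝ) * lam (σ i) ^ k * lam (σ j) ^ k *
          ∏ l : Fin N, P l (σ l))
      - (A ^ k) i i * (A ^ k) j j = -((A ^ k) i j) ^ 2 := by
  set s : Finset (Fin N) := {i, j}
  have hAk : A ^ k = P * diagonal (lam ^ k) * Pᵀ := by
    rw [hdecomp, pow_conj_of_mul_transpose_eq_one horth, diagonal_pow]
  have hsum : ∑ σ : Equiv.Perm (Fin N),
        ((Equiv.Perm.sign σ : ℤ) : ℝ) * lam (σ i) ^ k * lam (σ j) ^ k * ∏ l, P l (σ l) =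
      (rowPiecewise s (P * diagonal (lam ^ k)) P).det := by
    rw [det_rowPiecewise_mul_diagonal]
    refine Finset.sum_congr rfl fun σ _ => ?_
    simp only [s, Finset.prod_pair hij, Pi.pow_apply, mul_assoc]
  have hminor : (rowPiecewise s (A ^ k) 1).det =
      (A ^ k) i i * (A ^ k) j j - (A ^ k) i j * (A ^ k) j i := by
    rw [det_eq_det_submatrix_of_row_eq_one (injective_pair_iff_ne.mpr hij), det_fin_two]
    · simp [rowPiecewise, s]
    · intro l hl
      have hls : l ∉ s := by simpa [s, Matrix.range_cons, or_comm, eq_comm] using hl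
      exact if_neg hls
  rw [hsum, ← mul_one (det _), ← hdet, ← det_transpose P, ← det_mul, rowPiecewise_mul, ← hAk,
    horth, hminor, (hsymm.pow k).apply i j]
  ring
end

section
/- If A is the adjacency matrix of an undirected graph with no self-loops (A symmetric, a_{ij} ∈ {0,1}, zero diagonal), then the covariance matrix of the joint spectral measure is the graph Laplacian: for i ≠ j, E(X_iX_j) − E(X_i)E(X_j) = −a_{ij}, and for each i, E(X_i²) − E(X_i)² = ∑_{j} a_{ij} (the degree of vertex i). Explicitly, for i ≠ j: ∑_{σ∈S_N} ε(σ) λ_{σ(i)} λ_{σ(j)} ∏_{l} p_{lσ(l)} = −a_{ij}, and (A²)_{ii} = ∑_j a_{ij} while ∑_{σ} ε(σ) λ_{σ(i)} ∏_l p_{lσ(l)} = 0. -/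
open Matrix BigOperators

/-!
Since `A P = P Λ`, the row `(p_{lm} λ_m^{k_l})_m` is the `l`-th row of `A^{k_l} P`. Hence the joint
moment `∑_σ ε(σ) ∏_l p_{lσ(l)} λ_{σ(l)}^{k_l}` is `det P` times the determinant of the matrix whose
`l`-th row is the `l`-th row of `A^{k_l}`. For `E(X_i)` and `E(X_i X_j)` this is the identity matrix
with one, resp. two, rows replaced by rows of `A`, with determinant `a_ii = 0`, resp.
`a_ii a_jj - a_ij a_ji = -a_ij`.
-/

section

variable {n R : Type*} [Fintype n] [DecidableEq n] [CommRing R]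

theorem Matrix.det_eq_sum_sign_mul_prod (M : Matrix n n R) :
    M.det = ∑ σ : Equiv.Perm n, ((Equiv.Perm.sign σ : ℤ) : R) * ∏ l, M l (σ l) := by
  rw [← det_transpose, det_apply']
  rfl

theorem Matrix.pow_mul_eq_mul_diagonal_pow {A P : Matrix n n R} {lam : n → R}
    (h : A * P = P * diagonal lam) (k : ℕ) : A ^ k * P = P * diagonal (lam ^ k) := by
  induction k with
  | zero => simp
  | succ k ih =>
    rw [pow_succ', Matrix.mul_assoc, ih, ← Matrix.mul_assoc, h, Matrix.mul_assoc,
      diagonal_mul_diagonal, pow_succ']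
    rfl

theorem Matrix.det_one_updateRow (i : n) (u : n → R) :
    ((1 : Matrix n n R).updateRow i u).det = u i := by
  have h : (1 : Matrix n n R).updateRow i u =
      1 + replicateCol Unit (Pi.single i (1 : R)) * replicateRow Unit (u - Pi.single i 1) := by
    ext l m
    by_cases hl : l = i
    · subst hl; simp [← vecMulVec_eq, vecMulVec_apply, one_apply, Pi.single_apply, eq_comm]
    · simp [← vecMulVec_eq, vecMulVec_apply, hl]
  rw [h, det_one_add_replicateCol_mul_replicateRow]
  simp

theorem Matrix.det_one_updateRow_updateRow {i j : n} (hij : i ≠ j) (u v : n → R) :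
    (((1 : Matrix n n R).updateRow i u).updateRow j v).det = u i * v j - u j * v i := by
  -- Weinstein–Aronszajn `det (1 + U W) = det (1 + W U)` reduces this to a `2 × 2` determinant.
  let U : Matrix n (Fin 2) R := of fun l c => (1 : Matrix n n R) l (![i, j] c)
  let W : Matrix (Fin 2) n R := of ![u - Pi.single i 1, v - Pi.single j 1]
  have h1 : ((1 : Matrix n n R).updateRow i u).updateRow j v = 1 + U * W := by
    ext l m
    by_cases hj : l = j
    · subst hj; simp [U, W, mul_apply, Fin.sum_univ_two, one_apply, hij, Pi.single_apply, eq_comm]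
    by_cases hi : l = i
    · subst hi; simp [U, W, mul_apply, Fin.sum_univ_two, one_apply, hj, Pi.single_apply, eq_comm]
    · simp [U, W, mul_apply, Fin.sum_univ_two, one_apply, hi, hj]
  have hWU : ∀ c d, (W * U) c d = W c (![i, j] d) := fun c d => by
    simp [U, mul_apply, one_apply]
  have h2 : 1 + W * U = !![u i, u j; v i, v j] := by
    ext c d
    rw [add_apply, hWU]
    fin_cases c <;> fin_cases d <;> simp [W, hij, hij.symm]
  rw [h1, det_one_add_mul_comm, h2, det_fin_two_of]

def jointSpectralMoment (P : Matrix n n R) (lam : n → R) (k : n → ℕ) : R :=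
  ∑ σ : Equiv.Perm n, ((Equiv.Perm.sign σ : ℤ) : R) * (∏ l, lam (σ l) ^ k l) * ∏ l, P l (σ l)

theorem jointSpectralMoment_eq_det_mul_det {A P : Matrix n n R} {lam : n → R}
    (h : A * P = P * diagonal lam) (k : n → ℕ) :
    jointSpectralMoment P lam k = (of fun l => (A ^ k l) l).det * P.det := by
  have hrows : (of fun l => (A ^ k l) l) * P = of fun l m => P l m * lam m ^ k l := by
    ext l m
    calc ((of fun l => (A ^ k l) l) * P) l m = (A ^ k l * P) l m := rfl
      _ = P l m * lam m ^ k l := by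
        rw [pow_mul_eq_mul_diagonal_pow h, mul_diagonal, Pi.pow_apply]
  rw [← det_mul, hrows, det_eq_sum_sign_mul_prod, jointSpectralMoment]
  refine Finset.sum_congr rfl fun σ _ => ?_
  simp only [of_apply, Finset.prod_mul_distrib]
  ring

theorem Fintype.prod_pow_pi_single {M : Type*} [CommMonoid M] (f : n → M) (i : n) :
    ∏ l, f l ^ (Pi.single i 1 : n → ℕ) l = f i := by
  simp [Pi.single_apply]

theorem jointSpectralMoment_single (P : Matrix n n R) (lam : n → R) (i : n) :
    jointSpectralMoment P lam (Pi.single i 1) =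
      ∑ σ : Equiv.Perm n, ((Equiv.Perm.sign σ : ℤ) : R) * lam (σ i) * ∏ l, P l (σ l) := by
  simp only [jointSpectralMoment, Fintype.prod_pow_pi_single]

theorem jointSpectralMoment_single_add_single (P : Matrix n n R) (lam : n → R) (i j : n) :
    jointSpectralMoment P lam (Pi.single i 1 + Pi.single j 1) =
      ∑ σ : Equiv.Perm n,
        ((Equiv.Perm.sign σ : ℤ) : R) * lam (σ i) * lam (σ j) * ∏ l, P l (σ l) := by
  simp only [jointSpectralMoment, Pi.add_apply, pow_add, Finset.prod_mul_distrib,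
    Fintype.prod_pow_pi_single, mul_assoc]

theorem of_pow_single_eq_updateRow (A : Matrix n n R) (i : n) :
    (of fun l => (A ^ (Pi.single i 1 : n → ℕ) l) l) = (1 : Matrix n n R).updateRow i (A i) := by
  ext l m
  by_cases hl : l = i
  · subst hl; simp
  · simp [hl]

theorem of_pow_single_add_single_eq_updateRow_updateRow (A : Matrix n n R) {i j : n}
    (hij : i ≠ j) :
    (of fun l => (A ^ (Pi.single i 1 + Pi.single j 1 : n → ℕ) l) l) =
      ((1 : Matrix n n R).updateRow i (A i)).updateRow j (A j) := by
  ext l m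
  by_cases hj : l = j
  · subst hj; simp [hij]
  by_cases hi : l = i
  · subst hi; simp [hj]
  · simp [hi, hj]

end

/-- For the adjacency matrix of a simple undirected graph without self-loops, the
covariance matrix of the joint spectral measure is the graph Laplacian:
`E(X_iX_j) = -a_{ij}` for `i ≠ j`, `E(X_i²) = (A²)_{ii} = deg(i)` and `E(X_i) = 0`. -/
theorem covariance_eq_laplacian (N : ℕ)
    (A P : Matrix (Fin N) (Fin N) ℝ) (lam : Fin N → ℝ)
    (hsymm : A.IsSymm)
    (h01 : ∀ i j : Fin N, A i j = 0 ∨ A i j = 1)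
    (hdiag : ∀ i : Fin N, A i i = 0)
    (hdecomp : A = P * Matrix.diagonal lam * Pᵀ)
    (horth : P * Pᵀ = 1)
    (hdet : P.det = 1) :
    (∀ i j : Fin N, i ≠ j →
        ∑ σ : Equiv.Perm (Fin N),
            ((Equiv.Perm.sign σ : ℤ) : ℝ) * lam (σ i) * lam (σ j) *
              ∏ l : Fin N, P l (σ l)
          = -(A i j)) ∧
    (∀ i : Fin N, (A ^ 2) i i = ∑ j : Fin N, A i j) ∧
    (∀ i : Fin N,
        ∑ σ : Equiv.Perm (Fin N),
            ((Equiv.Perm.sign σ : ℤ) : ℝ) * lam (σ i) * ∏ l : Fin N, P l (σ l)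
          = 0) := by
  have hAP : A * P = P * diagonal lam := by
    rw [hdecomp, Matrix.mul_assoc, Matrix.mul_assoc, mul_eq_one_comm.mp horth, Matrix.mul_one]
  have hA : ∀ i j, A j i = A i j := fun i j => hsymm.apply i j
  have hidem : ∀ i j, A i j * A i j = A i j := fun i j => by
    rcases h01 i j with h | h <;> simp [h]
  refine ⟨fun i j hij => ?_, fun i => ?_, fun i => ?_⟩
  · rw [← jointSpectralMoment_single_add_single, jointSpectralMoment_eq_det_mul_det hAP,
      of_pow_single_add_single_eq_updateRow_updateRow A hij, det_one_updateRow_updateRow hij,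
      hdiag, hdiag, hA, hidem, hdet]
    ring
  · simp only [sq, mul_apply, hA, hidem]
  · rw [← jointSpectralMoment_single, jointSpectralMoment_eq_det_mul_det hAP,
      of_pow_single_eq_updateRow, det_one_updateRow, hdiag, zero_mul]
end

section
/- Let (γ_k)_{k≥0} be real coefficients of a power series f(x) = ∑_{k≥0} γ_k x^k with radius of convergence ρ strictly larger than max{|λ_j| : j = 1,...,N}, and let u ⊆ {1,...,N}. Then the series f(A) = ∑_{k≥0} γ_k A^k converges and det(f(A)_{uu}) = ∑_{σ∈S_N} ε(σ) (∏_{j=1}^N p_{jσ(j)}) ∏_{i∈u} f(λ_{σ(i)}), where f(A)_{uu} is the submatrix of f(A) with rows and columns indexed by u. -/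
/-!
Since `P` is orthogonal, `γ_k A^k = P (γ_k Λ^k) Pᵀ`, so the series for `f(A)` converges to
`P f(Λ) Pᵀ`, the diagonal one converging entrywise. Replacing the rows of `f(A)` outside `u` by
those of the identity gives a block triangular matrix with the same determinant as `f(A)_{uu}`;
that matrix is `Q Pᵀ`, where `Q` is `P` with its rows in `u` multiplied on the right by `f(Λ)`.
The Leibniz expansion of `det Q` is the right-hand side.
-/

open Matrix

namespace Matrix

def piecewiseRows {n m R : Type*} [DecidableEq n] (u : Finset n) (A B : Matrix n m R) :
    Matrix n m R :=
  of fun i => if i ∈ u then A i else B i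

theorem piecewiseRows_mul {n l m R : Type*} [DecidableEq n] [Fintype l] [Semiring R]
    (u : Finset n) (A B : Matrix n l R) (C : Matrix l m R) :
    piecewiseRows u A B * C = piecewiseRows u (A * C) (B * C) := by
  ext i j
  by_cases hi : i ∈ u <;> simp [piecewiseRows, hi, mul_apply]

variable {n R : Type*} [Fintype n] [DecidableEq n] [CommRing R]

theorem conj_diagonal_pow {P Q : Matrix n n R} (hPQ : P * Q = 1) (d : n → R) (k : ℕ) :
    (P * diagonal d * Q) ^ k = P * diagonal (d ^ k) * Q := by
  let U : (Matrix n n R)ˣ := ⟨P, Q, hPQ, mul_eq_one_comm.mp hPQ⟩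
  rw [← diagonal_pow]
  exact U.conj_pow (diagonal d) k

theorem hasSum_smul_pow_conj_diagonal [TopologicalSpace R] [IsTopologicalRing R]
    {P Q : Matrix n n R} (hPQ : P * Q = 1) {d f : n → R} {γ : ℕ → R}
    (hf : ∀ j, HasSum (fun k => γ k * d j ^ k) (f j)) :
    HasSum (fun k => γ k • (P * diagonal d * Q) ^ k) (P * diagonal f * Q) := by
  have hdiag : HasSum (fun k => diagonal (γ k • d ^ k)) (diagonal f) :=
    (Pi.hasSum.mpr hf).matrix_diagonal
  have hterm : ∀ k, γ k • (P * diagonal d * Q) ^ k = P * diagonal (γ k • d ^ k) * Q := by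
    intro k
    rw [conj_diagonal_pow hPQ, diagonal_smul, Matrix.mul_smul, Matrix.smul_mul]
  simpa only [hterm] using (hdiag.mul_left P).mul_right Q

theorem det_submatrix_val_eq_det_piecewiseRows_one (M : Matrix n n R) (u : Finset n) :
    det (M.submatrix ((↑) : u → n) ((↑) : u → n)) = det (piecewiseRows u M 1) := by
  rw [← det_submatrix_equiv_self (Equiv.sumCompl (· ∈ u)),
    show (piecewiseRows u M 1).submatrix (Equiv.sumCompl (· ∈ u)) (Equiv.sumCompl (· ∈ u)) =
      fromBlocks (M.submatrix (↑) (↑)) (M.submatrix (↑) (↑)) 0 1 from ?_,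
    det_fromBlocks_zero₂₁, det_one, mul_one]
  ext (i | i) (j | j)
  · simp [piecewiseRows, i.2]
  · simp [piecewiseRows, i.2]
  · simp [piecewiseRows, i.2, (ne_of_mem_of_not_mem j.2 i.2).symm]
  · simp [piecewiseRows, i.2, one_apply, Subtype.ext_iff]

theorem det_piecewiseRows_mul_diagonal (P : Matrix n n R) (f : n → R) (u : Finset n) :
    det (piecewiseRows u (P * diagonal f) P) =
      ∑ σ : Equiv.Perm n, (Equiv.Perm.sign σ : R) * (∏ j, P j (σ j)) * ∏ i ∈ u, f (σ i) := by
  rw [← det_transpose, det_apply']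
  refine Finset.sum_congr rfl fun σ _ => ?_
  have hentry : ∀ j, (piecewiseRows u (P * diagonal f) P)ᵀ (σ j) j =
      P j (σ j) * if j ∈ u then f (σ j) else 1 := by
    intro j
    by_cases hj : j ∈ u <;> simp [piecewiseRows, hj]
  rw [mul_assoc, Finset.prod_congr rfl fun j _ => hentry j, Finset.prod_mul_distrib,
    Finset.prod_ite_mem, Finset.univ_inter]

theorem det_submatrix_conj_diagonal {P Q : Matrix n n R} (hPQ : P * Q = 1) (f : n → R)
    (u : Finset n) :
    det ((P * diagonal f * Q).submatrix ((↑) : u → n) ((↑) : u → n)) =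
      det Q * ∑ σ : Equiv.Perm n,
        (Equiv.Perm.sign σ : R) * (∏ j, P j (σ j)) * ∏ i ∈ u, f (σ i) := by
  rw [det_submatrix_val_eq_det_piecewiseRows_one, ← hPQ, ← piecewiseRows_mul, det_mul,
    det_piecewiseRows_mul_diagonal, mul_comm]

end Matrix

theorem det_fun_submatrix_eq_gen_moment_general (N : ℕ)
    (A P : Matrix (Fin N) (Fin N) ℝ) (lam : Fin N → ℝ)
    (hdecomp : A = P * Matrix.diagonal lam * Pᵀ)
    (horth : P * Pᵀ = 1)
    (hdet : P.det = 1)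
    (γ : ℕ → ℝ) (ρ : ℝ)
    (hρ : ∀ j : Fin N, |lam j| < ρ)
    (hconv : ∀ x : ℝ, |x| < ρ → Summable fun k : ℕ => γ k * x ^ k)
    (u : Finset (Fin N)) :
    Summable (fun k : ℕ => γ k • A ^ k) ∧
    Matrix.det ((∑' k : ℕ, γ k • A ^ k).submatrix
        (fun i : {i // i ∈ u} => (i : Fin N)) (fun i : {i // i ∈ u} => (i : Fin N)))
      = ∑ σ : Equiv.Perm (Fin N),
          ((Equiv.Perm.sign σ : ℤ) : ℝ) * (∏ j : Fin N, P j (σ j)) *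
            ∏ i ∈ u, ∑' k : ℕ, γ k * lam (σ i) ^ k := by
  have hsum : HasSum (fun k => γ k • A ^ k)
      (P * diagonal (fun j => ∑' k, γ k * lam j ^ k) * Pᵀ) :=
    hdecomp ▸ hasSum_smul_pow_conj_diagonal horth fun j => (hconv _ (hρ j)).hasSum
  refine ⟨hsum.summable, ?_⟩
  rw [hsum.tsum_eq, det_submatrix_conj_diagonal horth, det_transpose, hdet, one_mul]

/-- For an analytic function `f(x) = ∑ γ_k x^k` whose radius of convergence exceeds the
spectral radius of `A`, the series `f(A) = ∑ γ_k A^k` converges and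
`det(f(A)_{uu}) = E(∏_{i∈u} f(X_i))` under the joint spectral measure. -/
theorem det_fun_submatrix_eq_gen_moment (N : ℕ)
    (A P : Matrix (Fin N) (Fin N) ℝ) (lam : Fin N → ℝ)
    (hsymm : A.IsSymm)
    (hdecomp : A = P * Matrix.diagonal lam * Pᵀ)
    (horth : P * Pᵀ = 1)
    (hdet : P.det = 1)
    (γ : ℕ → ℝ) (ρ : ℝ)
    (hρ : ∀ j : Fin N, |lam j| < ρ)
    (hconv : ∀ x : ℝ, |x| < ρ → Summable fun k : ℕ => γ k * x ^ k)
    (u : Finset (Fin N)) :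
    Summable (fun k : ℕ => γ k • A ^ k) ∧
    Matrix.det ((∑' k : ℕ, γ k • A ^ k).submatrix
        (fun i : {i // i ∈ u} => (i : Fin N)) (fun i : {i // i ∈ u} => (i : Fin N)))
      = ∑ σ : Equiv.Perm (Fin N),
          ((Equiv.Perm.sign σ : ℤ) : ℝ) * (∏ j : Fin N, P j (σ j)) *
            ∏ i ∈ u, ∑' k : ℕ, γ k * lam (σ i) ^ k :=
  det_fun_submatrix_eq_gen_moment_general N A P lam hdecomp horth hdet γ ρ hρ hconv u
end

section
/- For any polynomial f with real coefficients and any subset u ⊆ {1,...,N}, the characteristic polynomial of the submatrix f(A)_{uu} is given by the generalized moments of the joint spectral measure: for all real z, det(zI − f(A)_{uu}) = ∑_{σ∈S_N} ε(σ) (∏_{j=1}^N p_{jσ(j)}) ∏_{i∈u} (z − f(λ_{σ(i)})). In particular, the eigenvalues of f(A)_{uu} are the roots of the polynomial z ↦ ∑_{σ∈S_N} ε(σ) (∏_j p_{jσ(j)}) ∏_{i∈u} (z − f(λ_{σ(i)})). -/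
/-!
Since `f(A) = P f(Λ) Pᵀ`, the matrix `zI − f(A)` equals `P D Pᵀ` with `D = diag(z − f(λᵢ))`.
Replacing the columns of `P D Pᵀ` outside `u` by unit columns yields a block triangular matrix
whose determinant is the principal minor on `u`; because `P Pᵀ = I`, that matrix factors as
`P B` with `B_{mk} = p_{km} d_m` for `k ∈ u` and `B_{mk} = p_{km}` otherwise. With `det P = 1`,
the Leibniz expansion of `det B` is the stated sum over permutations.
-/

open Matrix Polynomial

theorem Polynomial.aeval_units_conj {R A : Type*} [CommSemiring R] [Semiring A] [Algebra R A]
    (u : Aˣ) (a : A) (f : R[X]) : aeval (↑u * a * ↑u⁻¹) f = ↑u * aeval a f * ↑u⁻¹ := by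
  simpa [ConjAct.units_smul_def] using
    congrArg (· f) (aeval_algEquiv (MulSemiringAction.toAlgEquiv R A (ConjAct.toConjAct u)) a)

namespace Matrix

theorem aeval_diagonal {R n : Type*} [CommSemiring R] [Fintype n] [DecidableEq n]
    (d : n → R) (f : R[X]) : aeval (diagonal d) f = diagonal fun i => f.eval (d i) := by
  rw [← diagonalAlgHom_apply (R := R), aeval_algHom_apply, aeval_pi_apply]
  simp

variable {n R : Type*} [Fintype n] [DecidableEq n] [CommRing R]

def unitColsOutside (u : Finset n) (M : Matrix n n R) : Matrix n n R :=
  of fun j k => if k ∈ u then M j k else (1 : Matrix n n R) j k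

theorem det_unitColsOutside (u : Finset n) (M : Matrix n n R) :
    (unitColsOutside u M).det = (M.submatrix ((↑) : u → n) (↑)).det := by
  rw [← det_submatrix_equiv_self (Equiv.sumCompl (· ∈ u))]
  have hblocks : (unitColsOutside u M).submatrix (Equiv.sumCompl (· ∈ u)) (Equiv.sumCompl (· ∈ u))
      = fromBlocks (M.submatrix (↑) (↑)) 0 (M.submatrix ((↑) : {i // i ∉ u} → n) (↑)) 1 := by
    ext (i | i) (j | j) <;> simp [unitColsOutside, j.2, one_apply, Subtype.ext_iff]
    exact fun h => absurd (h ▸ i.2) j.2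
  rw [hblocks, det_fromBlocks_zero₁₂, det_one, mul_one]

theorem unitColsOutside_mul_diagonal_mul {P Q : Matrix n n R} (hPQ : P * Q = 1) (d : n → R)
    (u : Finset n) :
    unitColsOutside u (P * diagonal d * Q) = P * of fun m k => Q m k * if k ∈ u then d m else 1 := by
  ext j k
  by_cases hk : k ∈ u
  · rw [unitColsOutside, of_apply, if_pos hk, mul_apply, mul_apply]
    simp only [mul_diagonal, of_apply, if_pos hk]
    exact Finset.sum_congr rfl fun m _ => by ring
  · simp [unitColsOutside, hk, ← hPQ, mul_apply]

theorem det_of_mul_ite (Q : Matrix n n R) (d : n → R) (u : Finset n) :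
    (of fun m k => Q m k * if k ∈ u then d m else 1).det
      = ∑ σ : Equiv.Perm n, Equiv.Perm.sign σ * (∏ i, Q (σ i) i) * ∏ i ∈ u, d (σ i) := by
  simp only [det_apply', of_apply, Finset.prod_mul_distrib, Finset.prod_ite_mem, Finset.univ_inter,
    mul_assoc]

theorem det_submatrix_mul_diagonal_mul {P Q : Matrix n n R} (hPQ : P * Q = 1) (d : n → R)
    (u : Finset n) :
    ((P * diagonal d * Q).submatrix ((↑) : u → n) (↑)).det
      = P.det * ∑ σ : Equiv.Perm n, Equiv.Perm.sign σ * (∏ i, Q (σ i) i) * ∏ i ∈ u, d (σ i) := by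
  rw [← det_unitColsOutside, unitColsOutside_mul_diagonal_mul hPQ, det_mul, det_of_mul_ite]

end Matrix

theorem charpoly_fun_submatrix_eq_gen_moment_general (N : ℕ)
    (A P : Matrix (Fin N) (Fin N) ℝ) (lam : Fin N → ℝ)
    (hdecomp : A = P * Matrix.diagonal lam * Pᵀ)
    (horth : P * Pᵀ = 1)
    (hdet : P.det = 1)
    (f : Polynomial ℝ) (u : Finset (Fin N)) (z : ℝ) :
    Matrix.det
        (z • (1 : Matrix {i // i ∈ u} {i // i ∈ u} ℝ) -
          ((Polynomial.aeval A) f).submatrix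
            (fun i : {i // i ∈ u} => (i : Fin N)) (fun i : {i // i ∈ u} => (i : Fin N)))
      = ∑ σ : Equiv.Perm (Fin N),
          ((Equiv.Perm.sign σ : ℤ) : ℝ) * (∏ j : Fin N, P j (σ j)) *
            ∏ i ∈ u, (z - f.eval (lam (σ i))) := by
  let U : (Matrix (Fin N) (Fin N) ℝ)ˣ := ⟨P, Pᵀ, horth, mul_eq_one_comm.mp horth⟩
  have hshift : z • (1 : Matrix (Fin N) (Fin N) ℝ) - aeval A f
      = P * diagonal (fun i => z - f.eval (lam i)) * Pᵀ :=
    calc z • 1 - aeval A f = aeval A (C z - f) := by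
          rw [map_sub, aeval_C, Algebra.algebraMap_eq_smul_one]
      _ = P * aeval (diagonal lam) (C z - f) * Pᵀ := hdecomp ▸ aeval_units_conj U _ _
      _ = P * diagonal (fun i => z - f.eval (lam i)) * Pᵀ := by
          rw [map_sub, aeval_C, aeval_diagonal, algebraMap_eq_diagonal, diagonal_sub]; rfl
  have hsub : z • (1 : Matrix u u ℝ) - (aeval A f).submatrix (↑) (↑)
      = (z • 1 - aeval A f : Matrix (Fin N) (Fin N) ℝ).submatrix (↑) (↑) := by
    rw [← submatrix_one _ Subtype.val_injective]
    rfl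
  rw [hsub, hshift, det_submatrix_mul_diagonal_mul horth, hdet, one_mul]
  simp only [transpose_apply]

/-- For a real polynomial `f` and a subset `u`, the characteristic polynomial of the
submatrix `f(A)_{uu}` is given by the generalized moments of the joint spectral measure:
`det(zI − f(A)_{uu}) = ∑_σ ε(σ) (∏_j p_{jσ(j)}) ∏_{i∈u} (z − f(λ_{σ(i)}))`. -/
theorem charpoly_fun_submatrix_eq_gen_moment (N : ℕ)
    (A P : Matrix (Fin N) (Fin N) ℝ) (lam : Fin N → ℝ)
    (hsymm : A.IsSymm)
    (hdecomp : A = P * Matrix.diagonal lam * Pᵀ)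
    (horth : P * Pᵀ = 1)
    (hdet : P.det = 1)
    (f : Polynomial ℝ) (u : Finset (Fin N)) (z : ℝ) :
    Matrix.det
        (z • (1 : Matrix {i // i ∈ u} {i // i ∈ u} ℝ) -
          ((Polynomial.aeval A) f).submatrix
            (fun i : {i // i ∈ u} => (i : Fin N)) (fun i : {i // i ∈ u} => (i : Fin N)))
      = ∑ σ : Equiv.Perm (Fin N),
          ((Equiv.Perm.sign σ : ℤ) : ℝ) * (∏ j : Fin N, P j (σ j)) *
            ∏ i ∈ u, (z - f.eval (lam (σ i))) :=
  charpoly_fun_submatrix_eq_gen_moment_general N A P lam hdecomp horth hdet f u z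
end

section
/- Let u and v be two subsets of {1,...,N} with the same cardinality. Then ∑_{σ∈S_N : σ(u)=v} ε(σ) ∏_{j=1}^N p_{jσ(j)} = det(P_{uv})², where the sum runs over all permutations σ mapping u onto v, and P_{uv} is the square submatrix of P with rows indexed by u and columns indexed by v (in any fixed orders; the squared determinant does not depend on the orders). Under the joint spectral measure, when the eigenvalues are distinct, this sum equals the probability ℙ({X_i : i∈u} = {λ_j : j∈v}). -/
/-!
Splitting a permutation `σ` with `σ(u) = v` into its pieces `u → v` and `uᶜ → vᶜ` shows that the
sum is `± det P_{uv} · det P_{uᶜvᶜ}`: it is the determinant of `P` with every entry outside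
`u × v ∪ uᶜ × vᶜ` replaced by zero, which becomes block diagonal once rows are ordered as `u, uᶜ`
and columns as `v, vᶜ`. For an orthogonal matrix, Jacobi's complementary minor identity gives
`det P_{uᶜvᶜ} = det P · (± det P_{uv})` with the same sign, so for `det P = 1` the sum is
`det (P_{uv})²`.
-/

open Matrix BigOperators
open Equiv Finset

theorem Int.cast_units_mul_self {R : Type*} [Ring R] (s : ℤˣ) : (s : R) * s = 1 := by
  rw [← Int.cast_mul, Int.units_coe_mul_self, Int.cast_one]

theorem Finset.image_perm_eq_iff {α : Type*} [DecidableEq α] {u v : Finset α} (σ : Perm α)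
    (h : u.card = v.card) : u.image σ = v ↔ ∀ j, j ∈ u ↔ σ j ∈ v := by
  constructor
  · rintro rfl j
    simp
  · intro hσ
    refine eq_of_subset_of_card_le (fun _ hj => ?_) ?_
    · obtain ⟨j, hju, rfl⟩ := mem_image.mp hj
      exact (hσ j).mp hju
    · rw [card_image_of_injective _ σ.injective, h]

namespace Matrix

variable {α R : Type*} [Fintype α] [DecidableEq α] [CommRing R]

theorem det_eq_sum_sign_mul_prod_apply (M : Matrix α α R) :
    M.det = ∑ σ : Perm α, (Perm.sign σ : R) * ∏ i, M i (σ i) := by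
  rw [← det_transpose, det_apply']
  rfl

theorem det_submatrix_trans_perm {β : Type*} [Fintype β] [DecidableEq β] (M : Matrix α α R)
    (ρ : β ≃ α) (g : Perm α) : (M.submatrix ρ (ρ.trans g)).det = Perm.sign g * M.det := by
  rw [← det_permute', ← det_submatrix_equiv_self ρ]
  rfl

def restrictToBlocks (u v : Finset α) (M : Matrix α α R) : Matrix α α R :=
  of fun i j => if (i ∈ u ↔ j ∈ v) then M i j else 0

variable (M : Matrix α α R) {u v : Finset α}

theorem prod_restrictToBlocks_apply (h : u.card = v.card) (σ : Perm α) :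
    ∏ i, restrictToBlocks u v M i (σ i) = if u.image σ = v then ∏ i, M i (σ i) else 0 := by
  by_cases hσ : u.image σ = v
  · rw [if_pos hσ]
    exact prod_congr rfl fun i _ => if_pos ((image_perm_eq_iff σ h).mp hσ i)
  · rw [if_neg hσ]
    obtain ⟨i, hi⟩ := not_forall.mp (mt (image_perm_eq_iff σ h).mpr hσ)
    exact prod_eq_zero (mem_univ i) (if_neg hi)

theorem det_restrictToBlocks (h : u.card = v.card) :
    (restrictToBlocks u v M).det = ∑ σ ∈ univ.filter (fun σ : Perm α => u.image σ = v),
      (Perm.sign σ : R) * ∏ i, M i (σ i) := by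
  simp_rw [det_eq_sum_sign_mul_prod_apply, prod_restrictToBlocks_apply M h, mul_ite, mul_zero,
    sum_ite, sum_const_zero, add_zero]

omit [Fintype α] in
theorem submatrix_restrictToBlocks (e : u ≃ v) (f : {i // i ∉ u} ≃ {j // j ∉ v}) :
    (restrictToBlocks u v M).submatrix (sumCompl (· ∈ u))
        ((sumCompl (· ∈ u)).trans (e.subtypeCongr f))
      = fromBlocks (of fun i j : u => M i (e j)) 0 0 (of fun i j : {i // i ∉ u} => M i (f j)) := by
  ext (i | i) (j | j) <;> simp [restrictToBlocks, subtypeCongr, (e _).2, (f _).2, i.2]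

theorem sum_sign_mul_prod_of_image_eq (e : u ≃ v) (f : {i // i ∉ u} ≃ {j // j ∉ v}) :
    ∑ σ ∈ univ.filter (fun σ : Perm α => u.image σ = v), (Perm.sign σ : R) * ∏ i, M i (σ i)
      = Perm.sign (e.subtypeCongr f) * (of fun i j : u => M i (e j)).det
          * (of fun i j : {i // i ∉ u} => M i (f j)).det := by
  have hcard : u.card = v.card := by simpa using Fintype.card_congr e
  rw [← det_restrictToBlocks M hcard, mul_assoc, ← det_fromBlocks_zero₂₁,
    ← submatrix_restrictToBlocks M e f, det_submatrix_trans_perm, ← mul_assoc,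
    Int.cast_units_mul_self, one_mul]

omit [Fintype α] [DecidableEq α] in
theorem det_mul_det_toBlocks₁₁_of_mul_transpose_eq_one {m n : Type*} [Fintype m]
    [DecidableEq m] [Fintype n] [DecidableEq n] (M : Matrix (m ⊕ n) (m ⊕ n) R)
    (hM : M * Mᵀ = 1) : M.det * M.toBlocks₁₁.det = M.toBlocks₂₂.det := by
  rw [← fromBlocks_toBlocks M] at hM ⊢
  set A := M.toBlocks₁₁
  set B := M.toBlocks₁₂
  set C := M.toBlocks₂₁
  set D := M.toBlocks₂₂
  rw [fromBlocks_transpose, fromBlocks_multiply, ← fromBlocks_one] at hM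
  obtain ⟨hAA, -, hCA, -⟩ := fromBlocks_inj.mp hM
  -- `Mᵀ` with its lower-right block replaced by `1` turns `M` block upper triangular.
  have key : fromBlocks A B C D * fromBlocks Aᵀ 0 Bᵀ 1 = fromBlocks 1 B 0 D := by
    rw [fromBlocks_multiply, hAA, hCA]
    simp
  simpa [det_fromBlocks_zero₁₂, det_fromBlocks_zero₂₁] using congrArg det key

end Matrix

theorem prob_set_image_eq_det_sq_general (N : ℕ)
    (P : Matrix (Fin N) (Fin N) ℝ)
    (horth : P * Pᵀ = 1)
    (hdet : P.det = 1)
    (u v : Finset (Fin N))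
    (e : {i // i ∈ u} ≃ {j // j ∈ v}) :
    ∑ σ ∈ Finset.univ.filter (fun σ : Equiv.Perm (Fin N) => u.image σ = v),
        ((Equiv.Perm.sign σ : ℤ) : ℝ) * ∏ j : Fin N, P j (σ j)
      = (Matrix.det (Matrix.of fun i j : {i // i ∈ u} => P (i : Fin N) ((e j : Fin N)))) ^ 2 := by
  obtain ⟨f⟩ : Nonempty ({i // i ∉ u} ≃ {j // j ∉ v}) :=
    Fintype.card_eq.mp (Fintype.card_compl_eq_card_compl _ _ (Fintype.card_congr e))
  set g := e.subtypeCongr f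
  set Q := P.submatrix (sumCompl (· ∈ u)) ((sumCompl (· ∈ u)).trans g)
  have hQ : Q * Qᵀ = 1 := by
    rw [transpose_submatrix, submatrix_mul_equiv, horth, submatrix_one_equiv]
  have hdetQ : Q.det = Perm.sign g := by rw [det_submatrix_trans_perm, hdet, mul_one]
  have hA : Q.toBlocks₁₁ = of fun i j : u => P i (e j) := by
    ext; simp [Q, g, toBlocks₁₁, subtypeCongr]
  have hD : Q.toBlocks₂₂ = of fun i j : {i // i ∉ u} => P i (f j) := by
    ext; simp [Q, g, toBlocks₂₂, subtypeCongr]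
  rw [sum_sign_mul_prod_of_image_eq P e f, ← hD,
    ← det_mul_det_toBlocks₁₁_of_mul_transpose_eq_one Q hQ, hdetQ, hA]
  linear_combination
    (of fun i j : u => P i (e j)).det ^ 2 * Int.cast_units_mul_self (R := ℝ) (Perm.sign g)

/-- Under the joint spectral measure, the probability that `{X_i : i ∈ u}` equals
`{λ_j : j ∈ v}` is `det(P_{uv})²`:
`∑_{σ : σ(u)=v} ε(σ) ∏_j p_{jσ(j)} = det(P_{uv})²`, for any fixed enumeration
(given by a bijection `e`) of the rows `u` and columns `v`. -/
theorem prob_set_image_eq_det_sq (N : ℕ)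
    (P : Matrix (Fin N) (Fin N) ℝ)
    (horth : P * Pᵀ = 1)
    (hdet : P.det = 1)
    (u v : Finset (Fin N)) (hcard : u.card = v.card)
    (e : {i // i ∈ u} ≃ {j // j ∈ v}) :
    ∑ σ ∈ Finset.univ.filter (fun σ : Equiv.Perm (Fin N) => u.image σ = v),
        ((Equiv.Perm.sign σ : ℤ) : ℝ) * ∏ j : Fin N, P j (σ j)
      = (Matrix.det (Matrix.of fun i j : {i // i ∈ u} => P (i : Fin N) ((e j : Fin N)))) ^ 2 :=
  prob_set_image_eq_det_sq_general N P horth hdet u v e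
end

section
/- Let P be an N×N real orthogonal matrix with det(P) = 1 and u ⊆ {1,...,N} with complement ū. Then det(P_{uu}) = det(P_{ūū}), where P_{uu} and P_{ūū} are the principal submatrices of P with rows and columns indexed by u and by ū respectively (Jacobi's identity for orthogonal matrices of determinant one). -/
open Matrix

/-!
Reorder the indices so that `u` comes first; then `P = [[A, B], [C, D]]` with `A = P_{uu}` and
`D = P_{ūū}`. Orthogonality gives `A Cᵀ + B Dᵀ = 0` and `C Cᵀ + D Dᵀ = 1`, so
`P * [[1, Cᵀ], [0, Dᵀ]] = [[A, 0], [C, 1]]`, and taking determinants gives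
`det P * det D = det A`.
-/

namespace Matrix

variable {R m n : Type*} [CommRing R] [Fintype m] [Fintype n] [DecidableEq m] [DecidableEq n]

theorem fromBlocks_mul_transpose_eq_one_iff {A : Matrix m m R} {B : Matrix m n R}
    {C : Matrix n m R} {D : Matrix n n R} :
    fromBlocks A B C D * (fromBlocks A B C D)ᵀ = 1 ↔
      A * Aᵀ + B * Bᵀ = 1 ∧ A * Cᵀ + B * Dᵀ = 0 ∧ C * Aᵀ + D * Bᵀ = 0 ∧ C * Cᵀ + D * Dᵀ = 1 := by
  rw [fromBlocks_transpose, fromBlocks_multiply, ← fromBlocks_one, fromBlocks_inj]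

theorem det_mul_det_toBlocks₂₂_of_mul_transpose_eq_one {Q : Matrix (m ⊕ n) (m ⊕ n) R}
    (hQ : Q * Qᵀ = 1) : Q.det * Q.toBlocks₂₂.det = Q.toBlocks₁₁.det := by
  obtain ⟨A, B, C, D, rfl⟩ : ∃ A B C D, Q = fromBlocks A B C D :=
    ⟨_, _, _, _, (fromBlocks_toBlocks Q).symm⟩
  obtain ⟨-, hAC, -, hCC⟩ := fromBlocks_mul_transpose_eq_one_iff.mp hQ
  have hclear : fromBlocks A B C D * fromBlocks 1 Cᵀ 0 Dᵀ = fromBlocks A 0 C 1 := by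
    simp only [fromBlocks_multiply, Matrix.mul_one, Matrix.mul_zero, add_zero, hAC, hCC]
  simpa [det_fromBlocks_zero₂₁, det_fromBlocks_zero₁₂] using congrArg det hclear

theorem det_toBlocks₁₁_eq_det_toBlocks₂₂_of_mul_transpose_eq_one {Q : Matrix (m ⊕ n) (m ⊕ n) R}
    (hQ : Q * Qᵀ = 1) (hdet : Q.det = 1) : Q.toBlocks₁₁.det = Q.toBlocks₂₂.det := by
  rw [← det_mul_det_toBlocks₂₂_of_mul_transpose_eq_one hQ, hdet, one_mul]

end Matrix

def Finset.sumComplEquiv {α : Type*} [Fintype α] [DecidableEq α] (u : Finset α) :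
    {i // i ∈ u} ⊕ {i // i ∈ uᶜ} ≃ α :=
  (Equiv.sumCongr (Equiv.refl _) (Equiv.subtypeEquivRight fun _ => Finset.mem_compl)).trans
    (Equiv.sumCompl (· ∈ u))

/-- Jacobi's identity for an orthogonal matrix of determinant one: complementary principal
minors are equal, `det(P_{uu}) = det(P_{ūū})`. -/
theorem jacobi_identity_orthogonal (N : ℕ)
    (P : Matrix (Fin N) (Fin N) ℝ)
    (horth : P * Pᵀ = 1)
    (hdet : P.det = 1)
    (u : Finset (Fin N)) :
    Matrix.det (P.submatrix
        (fun i : {i // i ∈ u} => (i : Fin N)) (fun i : {i // i ∈ u} => (i : Fin N)))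
      = Matrix.det (P.submatrix
        (fun i : {i // i ∈ uᶜ} => (i : Fin N)) (fun i : {i // i ∈ uᶜ} => (i : Fin N))) := by
  set e := u.sumComplEquiv
  have hQ : P.submatrix e e * (P.submatrix e e)ᵀ = 1 := by
    rw [transpose_submatrix, submatrix_mul_equiv, horth, submatrix_one_equiv]
  have hQdet : (P.submatrix e e).det = 1 := by rw [det_submatrix_equiv_self, hdet]
  -- the diagonal blocks of `P.submatrix e e` are `P_{uu}` and `P_{ūū}` definitionally
  exact det_toBlocks₁₁_eq_det_toBlocks₂₂_of_mul_transpose_eq_one hQ hQdet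
end

section
/- Let A be the N×N symmetric matrix of a graph, u = {1,...,p} with 1 ≤ p < N and ū = {p+1,...,N}, and let A^{(n)} be the (p + n(N−p))×(p + n(N−p)) symmetric matrix of the star product of n copies of the graph merged along u: A^{(n)} has top-left block A_{uu}, the block A_{uū} repeated n times along the first block row, A_{ūu} repeated n times along the first block column, and block-diagonal blocks A_{ūū}, all other blocks zero. Then for all nonnegative integers k₁,...,k_p, as n → ∞, n^{−(k₁+···+k_p)/2} · det(A^{(n)}[k₁,...,k_p,0,...,0]) converges to det(D[k₁/2,...,k_p/2]) if all k_i are even, and to 0 otherwise, where D = A_{uū}A_{ūu}, and for a square matrix M, M[m₁,...,m_p] denotes the p×p matrix whose i-th column is the i-th column of M^{m_i} (with M⁰ = I); A^{(n)}[k₁,...,k_p,0,...,0] is the matrix whose i-th column is the i-th column of (A^{(n)})^{k_i} for i ≤ p and the i-th standard basis column for i > p. -/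
/-
Vectors that agree on all `n` copies of `ū` form an `A^{(n)}`-invariant subspace containing the
`u`-columns. Identifying it with `ℝ^{u ⊔ ū}`, with the common `ū`-part scaled by `1/√n`, the
restriction of `A^{(n)}` is `√n • J + K`, where `J = [[0, A_{uū}], [A_{ūu}, 0]]` and
`K = diag(A_{uu}, A_{ūū})`. So the `u`-block of `(A^{(n)})^t` is that of
`(√n • J + K)^t = √n^t • (J + K/√n)^t`. As `A^{(n)}[k,0]` is block lower triangular, the
normalized determinant is a continuous function of `1/√n`, whose value at `0` is built from the
`u`-blocks of the `J^{k_j}`: these are `D^{k_j/2}` for even `k_j` and `0` for odd `k_j`.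
-/

open Matrix BigOperators Filter

/-- The adjacency matrix of the star product of `n` copies of a graph merged along the
first block of `p` vertices: indices are `Fin p ⊕ (Fin n × Fin q)`. -/
def starProductMatrix {p q : ℕ} (A : Matrix (Fin p ⊕ Fin q) (Fin p ⊕ Fin q) ℝ) (n : ℕ) :
    Matrix (Fin p ⊕ Fin n × Fin q) (Fin p ⊕ Fin n × Fin q) ℝ :=
  Matrix.of fun r c =>
    match r, c with
    | Sum.inl i, Sum.inl i' => A (Sum.inl i) (Sum.inl i')
    | Sum.inl i, Sum.inr mj => A (Sum.inl i) (Sum.inr mj.2)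
    | Sum.inr mj, Sum.inl i => A (Sum.inr mj.2) (Sum.inl i)
    | Sum.inr mj, Sum.inr mj' =>
        if mj.1 = mj'.1 then A (Sum.inr mj.2) (Sum.inr mj'.2) else 0

/-- The matrix `A^{(n)}[k₁,...,k_p,0,...,0]`: its `i`-th column is the `i`-th column of
`(A^{(n)})^{k_i}` for `i` in the first block, and the corresponding column of the identity
matrix otherwise. -/
def starMixedPowers {p q : ℕ} (A : Matrix (Fin p ⊕ Fin q) (Fin p ⊕ Fin q) ℝ) (n : ℕ)
    (k : Fin p → ℕ) : Matrix (Fin p ⊕ Fin n × Fin q) (Fin p ⊕ Fin n × Fin q) ℝ :=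
  Matrix.of fun r c =>
    match c with
    | Sum.inl i => ((starProductMatrix A n) ^ (k i)) r (Sum.inl i)
    | Sum.inr x => (1 : Matrix (Fin p ⊕ Fin n × Fin q) (Fin p ⊕ Fin n × Fin q) ℝ) r (Sum.inr x)

namespace Matrix

variable {l m n α : Type*} [Fintype l] [Fintype m] [DecidableEq l] [DecidableEq m]

theorem det_eq_det_toBlocks₁₁ {R : Type*} [CommRing R] (M : Matrix (l ⊕ m) (l ⊕ m) R)
    (h₁₂ : M.toBlocks₁₂ = 0) (h₂₂ : M.toBlocks₂₂ = 1) :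
    M.det = M.toBlocks₁₁.det := by
  rw [← fromBlocks_toBlocks M, h₁₂, h₂₂, det_fromBlocks_zero₁₂, det_one, mul_one,
    toBlocks_fromBlocks₁₁]

theorem pow_mul_eq_mul_pow_of_mul_eq [Semiring α] [Fintype n] [DecidableEq n]
    {A : Matrix n n α} {E : Matrix n m α} {B : Matrix m m α} (h : A * E = E * B) (t : ℕ) :
    A ^ t * E = E * B ^ t := by
  induction t with
  | zero => simp
  | succ t ih =>
    rw [pow_succ', Matrix.mul_assoc, ih, ← Matrix.mul_assoc, h, Matrix.mul_assoc, ← pow_succ']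

theorem toBlocks₁₁_fromBlocks_zero_pow [Semiring α] (B : Matrix l m α) (C : Matrix m l α)
    (t : ℕ) :
    (fromBlocks 0 B C 0 ^ t).toBlocks₁₁ = if Even t then (B * C) ^ (t / 2) else 0 := by
  have hsq : fromBlocks 0 B C 0 ^ 2 = fromBlocks (B * C) 0 0 (C * B) := by
    simp [sq, fromBlocks_multiply]
  obtain ⟨r, rfl | rfl⟩ := Nat.even_or_odd' t
  · simp [pow_mul, hsq, fromBlocks_diagonal_pow]
  · simp [pow_succ, pow_mul, hsq, fromBlocks_diagonal_pow, fromBlocks_multiply, Nat.not_even_bit1]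

theorem det_of_fromBlocks_zero_pow_apply_inl {R : Type*} [CommRing R] (B : Matrix l m R)
    (C : Matrix m l R) (k : l → ℕ) [Decidable (∀ i, Even (k i))] :
    (of fun i j => (fromBlocks 0 B C 0 ^ k j) (Sum.inl i) (Sum.inl j)).det =
      if ∀ i, Even (k i) then (of fun i j => ((B * C) ^ (k j / 2)) i j).det else 0 := by
  have hcol (i j : l) : (fromBlocks 0 B C 0 ^ k j) (Sum.inl i) (Sum.inl j) =
      if Even (k j) then ((B * C) ^ (k j / 2)) i j else 0 := by
    change (fromBlocks 0 B C 0 ^ k j).toBlocks₁₁ i j = _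
    rw [toBlocks₁₁_fromBlocks_zero_pow]
    split_ifs <;> rfl
  split_ifs with heven
  · simp only [hcol, heven, if_true]
  · obtain ⟨j, hj⟩ := not_forall.mp heven
    exact det_eq_zero_of_column_eq_zero j fun i => by simp [hcol, hj]

end Matrix

section StarProduct

variable {p q : ℕ} (A : Matrix (Fin p ⊕ Fin q) (Fin p ⊕ Fin q) ℝ)

-- `p`, `q` are explicit: left to unification, products with `starLift` pick up the
-- `CStarMatrix` default `HMul` instance.
def starLift (p q n : ℕ) (c : ℝ) : Matrix (Fin p ⊕ Fin n × Fin q) (Fin p ⊕ Fin q) ℝ :=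
  fromBlocks 1 0 0 (c • (1 : Matrix (Fin q) (Fin q) ℝ).submatrix Prod.snd id)

theorem starProductMatrix_mul_starLift {n : ℕ} {s : ℝ} (hs : s ≠ 0) (hsn : s ^ 2 = n) :
    starProductMatrix A n * starLift p q n s⁻¹ = starLift p q n s⁻¹ *
      (s • fromBlocks 0 A.toBlocks₁₂ A.toBlocks₂₁ 0 +
        fromBlocks A.toBlocks₁₁ 0 0 A.toBlocks₂₂) := by
  ext (i | ⟨m, j⟩) (i' | j') <;>
    simp [mul_apply, Fintype.sum_sum_type, Fintype.sum_prod_type, starLift, starProductMatrix,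
      one_apply, toBlocks₁₁, toBlocks₁₂, toBlocks₂₁, toBlocks₂₂]
  all_goals field_simp
  rw [hsn, mul_comm]

theorem starProductMatrix_pow_apply_inl_inl {n : ℕ} (hn : n ≠ 0) (t : ℕ) (i j : Fin p) :
    (starProductMatrix A n ^ t) (Sum.inl i) (Sum.inl j) =
      ((√n • fromBlocks 0 A.toBlocks₁₂ A.toBlocks₂₁ 0 +
        fromBlocks A.toBlocks₁₁ 0 0 A.toBlocks₂₂) ^ t) (Sum.inl i) (Sum.inl j) := by
  have hs : √(n : ℝ) ≠ 0 := by positivity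
  have h := congrFun₂ (pow_mul_eq_mul_pow_of_mul_eq
    (starProductMatrix_mul_starLift A hs (Real.sq_sqrt n.cast_nonneg)) t) (Sum.inl i) (Sum.inl j)
  simpa [mul_apply, Fintype.sum_sum_type, starLift, one_apply] using h

theorem det_starMixedPowers (n : ℕ) (k : Fin p → ℕ) :
    (starMixedPowers A n k).det =
      (of fun i j => (starProductMatrix A n ^ k j) (Sum.inl i) (Sum.inl j)).det := by
  rw [det_eq_det_toBlocks₁₁]
  · rfl
  all_goals ext; simp [starMixedPowers, toBlocks₁₂, toBlocks₂₂, one_apply]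

theorem det_starMixedPowers_eq_mul {n : ℕ} (hn : n ≠ 0) (k : Fin p → ℕ) :
    (starMixedPowers A n k).det = √n ^ (∑ i, k i) *
      (of fun i j => ((fromBlocks 0 A.toBlocks₁₂ A.toBlocks₂₁ 0 +
        (√n)⁻¹ • fromBlocks A.toBlocks₁₁ 0 0 A.toBlocks₂₂) ^ k j)
          (Sum.inl i) (Sum.inl j)).det := by
  have hs : √(n : ℝ) ≠ 0 := by positivity
  have hscale : √n • fromBlocks 0 A.toBlocks₁₂ A.toBlocks₂₁ 0 +
      fromBlocks A.toBlocks₁₁ 0 0 A.toBlocks₂₂ =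
        √n • (fromBlocks 0 A.toBlocks₁₂ A.toBlocks₂₁ 0 +
          (√n)⁻¹ • fromBlocks A.toBlocks₁₁ 0 0 A.toBlocks₂₂) := by
    rw [smul_add, smul_smul, mul_inv_cancel₀ hs, one_smul]
  rw [det_starMixedPowers, ← Finset.prod_pow_eq_pow_sum, ← det_mul_row]
  congr 1
  ext i j
  rw [of_apply, starProductMatrix_pow_apply_inl_inl A hn, hscale, smul_pow]
  rfl

end StarProduct

theorem star_graph_moment_limit_general (p q : ℕ)
    (A : Matrix (Fin p ⊕ Fin q) (Fin p ⊕ Fin q) ℝ)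
    (k : Fin p → ℕ) :
    Filter.Tendsto
      (fun n : ℕ =>
        Matrix.det (starMixedPowers A n k) / (Real.sqrt n) ^ (∑ i : Fin p, k i))
      Filter.atTop
      (nhds (if ∀ i : Fin p, Even (k i) then
          Matrix.det (Matrix.of fun i j : Fin p =>
            ((A.toBlocks₁₂ * A.toBlocks₂₁) ^ (k j / 2)) i j)
        else 0)) := by
  set J := fromBlocks 0 A.toBlocks₁₂ A.toBlocks₂₁ 0
  set K := fromBlocks A.toBlocks₁₁ 0 0 A.toBlocks₂₂
  let F : ℝ → ℝ := fun ε =>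
    (of fun i j => ((J + ε • K) ^ k j) (Sum.inl i) (Sum.inl j)).det
  have hF : Continuous F := by fun_prop
  have h_inv_sqrt : Tendsto (fun n : ℕ => (√n)⁻¹) atTop (nhds 0) :=
    tendsto_inv_atTop_zero.comp (Real.tendsto_sqrt_atTop.comp tendsto_natCast_atTop_atTop)
  have h_eq : ∀ᶠ n : ℕ in atTop,
      F (√n)⁻¹ = (starMixedPowers A n k).det / √n ^ ∑ i, k i := by
    filter_upwards [eventually_ne_atTop 0] with n hn
    rw [det_starMixedPowers_eq_mul A hn, mul_div_cancel_left₀ _ (by positivity)]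
  have h_F0 : F 0 = if ∀ i, Even (k i) then
      (of fun i j => ((A.toBlocks₁₂ * A.toBlocks₂₁) ^ (k j / 2)) i j).det else 0 := by
    simp only [F, zero_smul, add_zero, J, det_of_fromBlocks_zero_pow_apply_inl]
  rw [← h_F0]
  exact ((hF.tendsto 0).comp h_inv_sqrt).congr' h_eq

/-- Multivariate CLT for star graphs (moment convergence): as `n → ∞`,
`n^{-(k₁+⋯+k_p)/2} det(A^{(n)}[k₁,...,k_p,0,...,0])` converges to
`det(D[k₁/2,...,k_p/2])` with `D = A_{uū} A_{ūu}` when all `k_i` are even,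
and to `0` otherwise. -/
theorem star_graph_moment_limit (p q : ℕ) (hp : 1 ≤ p) (hq : 1 ≤ q)
    (A : Matrix (Fin p ⊕ Fin q) (Fin p ⊕ Fin q) ℝ) (hsymm : Aᵀ = A)
    (k : Fin p → ℕ) :
    Filter.Tendsto
      (fun n : ℕ =>
        Matrix.det (starMixedPowers A n k) / (Real.sqrt n) ^ (∑ i : Fin p, k i))
      Filter.atTop
      (nhds (if ∀ i : Fin p, Even (k i) then
          Matrix.det (Matrix.of fun i j : Fin p =>
            ((A.toBlocks₁₂ * A.toBlocks₂₁) ^ (k j / 2)) i j)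
        else 0)) :=
  star_graph_moment_limit_general p q A k
end

section
/- With A^{(n)} the star-product matrix of n copies of A merged along u = {1,...,p}, for every real z with |z| < 1/‖A‖_F (so that all the relevant matrices are invertible for n large), the (u,u)-block of the rescaled resolvent converges: ((I − (z/√n) A^{(n)})^{−1})_{uu} → (I − z²D)^{−1} as n → ∞, where D = A_{uū}A_{ūu} and ‖·‖_F is the Frobenius norm. -/
open Matrix BigOperators Filter

/-! ### Auxiliary: Frobenius-norm facts expressed via sums of squares -/

section FrobSec
attribute [local instance] Matrix.frobeniusSeminormedAddCommGroup
  Matrix.frobeniusNormedAddCommGroup Matrix.frobeniusNormedRing Matrix.frobeniusNormedSpace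

variable {m k : Type*} [Fintype m] [Fintype k] [DecidableEq m]

omit [DecidableEq m] in
lemma frob_norm_sq (X : Matrix m k ℝ) : ‖X‖ = Real.sqrt (∑ i, ∑ j, (X i j)^2) := by
  rw [Matrix.frobenius_norm_def, Real.sqrt_eq_rpow]
  congr 1
  refine Finset.sum_congr rfl fun i _ => Finset.sum_congr rfl fun j _ => ?_
  rw [Real.rpow_two, Real.norm_eq_abs, sq_abs]

lemma isUnit_one_sub_sq (X : Matrix m m ℝ) (h : Real.sqrt (∑ i, ∑ j, (X i j)^2) < 1) :
    IsUnit (1 - X) := by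
  have : CompleteSpace (Matrix m m ℝ) := FiniteDimensional.complete ℝ _
  exact isUnit_one_sub_of_norm_lt_one ((frob_norm_sq X).symm ▸ h : ‖X‖ < 1)

lemma frob_mul_sq (Y : Matrix m k ℝ) (Z : Matrix k m ℝ) :
    Real.sqrt (∑ i, ∑ j, ((Y * Z) i j)^2) ≤
      Real.sqrt (∑ i, ∑ j, (Y i j)^2) * Real.sqrt (∑ i, ∑ j, (Z i j)^2) := by
  classical
  have := Matrix.frobenius_norm_mul Y Z
  rwa [frob_norm_sq, frob_norm_sq, frob_norm_sq] at this

end FrobSec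

/-! ### Auxiliary: block structure of the star-product matrix -/

variable {p q n : ℕ}

def repRow (n : ℕ) {p q : ℕ} (R : Matrix (Fin p) (Fin q) ℝ) : Matrix (Fin p) (Fin n × Fin q) ℝ :=
  Matrix.of fun i mj => R i mj.2

def repCol (n : ℕ) {p q : ℕ} (S : Matrix (Fin q) (Fin p) ℝ) : Matrix (Fin n × Fin q) (Fin p) ℝ :=
  Matrix.of fun mj i => S mj.2 i

def repDiag (n : ℕ) {q : ℕ} (C : Matrix (Fin q) (Fin q) ℝ) :
    Matrix (Fin n × Fin q) (Fin n × Fin q) ℝ :=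
  Matrix.of fun mj mj' => if mj.1 = mj'.1 then C mj.2 mj'.2 else 0

lemma repDiag_mul (C C' : Matrix (Fin q) (Fin q) ℝ) :
    repDiag n C * repDiag n C' = repDiag n (C * C') := by
  ext ⟨m, j⟩ ⟨m', j'⟩
  simp only [repDiag, Matrix.mul_apply, Matrix.of_apply, Fintype.sum_prod_type]
  simp only [ite_mul, zero_mul, mul_ite, mul_zero]
  rw [Finset.sum_comm]
  simp [Finset.sum_ite_eq, Finset.sum_ite_eq']

lemma repDiag_one : repDiag n (1 : Matrix (Fin q) (Fin q) ℝ) = 1 := by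
  ext ⟨m, j⟩ ⟨m', j'⟩
  simp only [repDiag, Matrix.one_apply, Matrix.of_apply, Prod.mk.injEq]
  by_cases h1 : m = m' <;> by_cases h2 : j = j' <;> simp [h1, h2]

lemma repRow_mul_diag (R : Matrix (Fin p) (Fin q) ℝ) (C : Matrix (Fin q) (Fin q) ℝ) :
    repRow n R * repDiag n C = repRow n (R * C) := by
  ext i ⟨m, j⟩
  simp only [repRow, repDiag, Matrix.mul_apply, Matrix.of_apply, Fintype.sum_prod_type]
  simp [Finset.sum_comm (γ := Fin n), Finset.sum_ite_eq, Finset.sum_ite_eq']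

lemma repRow_mul_col (R : Matrix (Fin p) (Fin q) ℝ) (S : Matrix (Fin q) (Fin p) ℝ) :
    repRow n R * repCol n S = (n : ℝ) • (R * S) := by
  ext i i'
  simp [repRow, repCol, Matrix.mul_apply, Fintype.sum_prod_type, Finset.mul_sum,
    Matrix.smul_apply]

lemma one_sub_smul_star_eq (A : Matrix (Fin p ⊕ Fin q) (Fin p ⊕ Fin q) ℝ) (t : ℝ) :
    (1 : Matrix (Fin p ⊕ Fin n × Fin q) (Fin p ⊕ Fin n × Fin q) ℝ) - t • starProductMatrix A n
      = fromBlocks (1 - t • A.toBlocks₁₁) (repRow n (-(t • A.toBlocks₁₂)))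
          (repCol n (-(t • A.toBlocks₂₁))) (repDiag n (1 - t • A.toBlocks₂₂)) := by
  ext r c
  rcases r with i | ⟨m, j⟩ <;> rcases c with i' | ⟨m', j'⟩
  · simp [starProductMatrix, fromBlocks, toBlocks₁₁, Matrix.one_apply]
  · simp [starProductMatrix, fromBlocks, repRow, toBlocks₁₂, Matrix.one_apply]
  · simp [starProductMatrix, fromBlocks, repCol, toBlocks₂₁, Matrix.one_apply]
  · by_cases h : m = m' <;>
      simp [starProductMatrix, fromBlocks, repDiag, toBlocks₂₂, Matrix.one_apply,
        Prod.ext_iff, h]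

lemma star_inv_block (A : Matrix (Fin p ⊕ Fin q) (Fin p ⊕ Fin q) ℝ) (t : ℝ)
    (hE : IsUnit ((1 : Matrix (Fin q) (Fin q) ℝ) - t • A.toBlocks₂₂))
    (hM : IsUnit ((1 : Matrix (Fin p ⊕ Fin n × Fin q) (Fin p ⊕ Fin n × Fin q) ℝ)
        - t • starProductMatrix A n)) :
    (((1 : Matrix (Fin p ⊕ Fin n × Fin q) (Fin p ⊕ Fin n × Fin q) ℝ)
        - t • starProductMatrix A n)⁻¹).toBlocks₁₁
      = ((1 : Matrix (Fin p) (Fin p) ℝ) - t • A.toBlocks₁₁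
          - ((n : ℝ) * t ^ 2) • (A.toBlocks₁₂ * ((1 : Matrix (Fin q) (Fin q) ℝ)
              - t • A.toBlocks₂₂)⁻¹ * A.toBlocks₂₁))⁻¹ := by
  classical
  set E : Matrix (Fin q) (Fin q) ℝ := 1 - t • A.toBlocks₂₂ with hEdef
  letI iE : Invertible E := hE.nonempty_invertible.some
  letI iD : Invertible (repDiag n E) :=
    ⟨repDiag n (⅟E), by rw [repDiag_mul, invOf_mul_self, repDiag_one],
      by rw [repDiag_mul, mul_invOf_self, repDiag_one]⟩
  rw [one_sub_smul_star_eq] at hM ⊢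
  letI iM := hM.nonempty_invertible.some
  letI iS := Matrix.invertibleOfFromBlocks₂₂Invertible (1 - t • A.toBlocks₁₁)
    (repRow n (-(t • A.toBlocks₁₂))) (repCol n (-(t • A.toBlocks₂₁))) (repDiag n E)
  have h1 : (fromBlocks (1 - t • A.toBlocks₁₁) (repRow n (-(t • A.toBlocks₁₂)))
      (repCol n (-(t • A.toBlocks₂₁))) (repDiag n E))⁻¹
      = ⅟(fromBlocks (1 - t • A.toBlocks₁₁) (repRow n (-(t • A.toBlocks₁₂)))
      (repCol n (-(t • A.toBlocks₂₁))) (repDiag n E)) := (invOf_eq_nonsing_inv _).symm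
  rw [h1, Matrix.invOf_fromBlocks₂₂_eq, Matrix.toBlocks_fromBlocks₁₁, invOf_eq_nonsing_inv]
  congr 1
  have hinvD : ⅟(repDiag n E) = repDiag n (⅟ E) := rfl
  rw [hinvD, invOf_eq_nonsing_inv, repRow_mul_diag, repRow_mul_col]
  have : -(t • A.toBlocks₁₂) * E⁻¹ * -(t • A.toBlocks₂₁)
      = (t * t) • (A.toBlocks₁₂ * E⁻¹ * A.toBlocks₂₁) := by
    simp only [Matrix.neg_mul, Matrix.mul_neg, neg_neg, Matrix.smul_mul, Matrix.mul_smul,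
      smul_smul]
    rw [smul_neg, neg_neg, smul_smul]
  rw [this, smul_smul, ← sq]

/-! ### Auxiliary: sums of squares -/

lemma sum_sq_decomp (A : Matrix (Fin p ⊕ Fin q) (Fin p ⊕ Fin q) ℝ) :
    ∑ i, ∑ j, (A i j)^2
      = (∑ i, ∑ j, (A.toBlocks₁₁ i j)^2) + (∑ i, ∑ j, (A.toBlocks₁₂ i j)^2)
        + ((∑ i, ∑ j, (A.toBlocks₂₁ i j)^2) + (∑ i, ∑ j, (A.toBlocks₂₂ i j)^2)) := by
  simp [Fintype.sum_sum_type, toBlocks₁₁, toBlocks₁₂, toBlocks₂₁, toBlocks₂₂,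
    Finset.sum_add_distrib]
  ring

lemma sum_const_snd {n q : ℕ} (g : Fin q → ℝ) :
    ∑ mj : Fin n × Fin q, g mj.2 = (n : ℝ) * ∑ j, g j := by
  rw [Fintype.sum_prod_type]
  simp [Finset.sum_const, Finset.card_univ, nsmul_eq_mul]

lemma sum_star_br {n q : ℕ} (B : Matrix (Fin q) (Fin q) ℝ) :
    ∑ mj : Fin n × Fin q, ∑ mj' : Fin n × Fin q,
        ((if mj.1 = mj'.1 then B mj.2 mj'.2 else 0 : ℝ))^2
      = (n : ℝ) * ∑ j, ∑ j', (B j j')^2 := by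
  rw [Fintype.sum_prod_type]
  have key : ∀ (m : Fin n) (j : Fin q), (∑ mj' : Fin n × Fin q,
      ((if m = mj'.1 then B j mj'.2 else 0 : ℝ))^2) = ∑ j', (B j j')^2 := by
    intro m j
    rw [Fintype.sum_prod_type]
    rw [Finset.sum_eq_single m]
    · simp
    · intro m' _ hm'; simp [Ne.symm hm']
    · intro h; exact absurd (Finset.mem_univ m) h
  simp only [key]
  simp [Finset.sum_const, Finset.card_univ, nsmul_eq_mul]

lemma sum_sq_star (A : Matrix (Fin p ⊕ Fin q) (Fin p ⊕ Fin q) ℝ) (n : ℕ) :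
    ∑ r, ∑ c, (starProductMatrix A n r c)^2
      = (∑ i, ∑ j, (A.toBlocks₁₁ i j)^2) + (n : ℝ) * (∑ i, ∑ j, (A.toBlocks₁₂ i j)^2)
        + ((n : ℝ) * (∑ i, ∑ j, (A.toBlocks₂₁ i j)^2)
        + (n : ℝ) * (∑ i, ∑ j, (A.toBlocks₂₂ i j)^2)) := by
  simp only [Fintype.sum_sum_type, starProductMatrix, Matrix.of_apply,
    Finset.sum_add_distrib]
  rw [show (∑ mj : Fin n × Fin q, ∑ mj' : Fin n × Fin q,
      ((if mj.1 = mj'.1 then A (Sum.inr mj.2) (Sum.inr mj'.2) else 0 : ℝ))^2)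
      = (n : ℝ) * ∑ j, ∑ j', (A (Sum.inr j) (Sum.inr j'))^2
      from sum_star_br (Matrix.of fun j j' => A (Sum.inr j) (Sum.inr j'))]
  simp only [show ∀ i : Fin p, (∑ mj : Fin n × Fin q, (A (Sum.inl i) (Sum.inr mj.2))^2)
      = (n : ℝ) * ∑ j, (A (Sum.inl i) (Sum.inr j))^2
      from fun i => sum_const_snd (fun j => (A (Sum.inl i) (Sum.inr j))^2)]
  rw [show (∑ mj : Fin n × Fin q, ∑ i : Fin p, (A (Sum.inr mj.2) (Sum.inl i))^2)
      = (n : ℝ) * ∑ j, ∑ i, (A (Sum.inr j) (Sum.inl i))^2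
      from sum_const_snd (fun j => ∑ i, (A (Sum.inr j) (Sum.inl i))^2)]
  simp only [toBlocks₁₁, toBlocks₁₂, toBlocks₂₁, toBlocks₂₂, Matrix.of_apply, Finset.mul_sum]
  ring
set_option maxHeartbeats 1000000 in
/-- Convergence of the `(u,u)`-block of the rescaled resolvent of the star-product matrix:
for `|z| < 1/‖A‖_F`, `((I − (z/√n) A^{(n)})^{-1})_{uu} → (I − z² D)^{-1}` as `n → ∞`,
where `D = A_{uū} A_{ūu}`. -/
theorem star_graph_resolvent_limit (p q : ℕ) (hp : 1 ≤ p) (hq : 1 ≤ q)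
    (A : Matrix (Fin p ⊕ Fin q) (Fin p ⊕ Fin q) ℝ) (hsymm : Aᵀ = A)
    (z : ℝ)
    (hz : |z| * Real.sqrt (∑ i, ∑ j, (A i j) ^ 2) < 1) :
    Filter.Tendsto
      (fun n : ℕ =>
        (((1 : Matrix (Fin p ⊕ Fin n × Fin q) (Fin p ⊕ Fin n × Fin q) ℝ)
            - (z / Real.sqrt n) • starProductMatrix A n)⁻¹).toBlocks₁₁)
      Filter.atTop
      (nhds (((1 : Matrix (Fin p) (Fin p) ℝ)
          - z ^ 2 • (A.toBlocks₁₂ * A.toBlocks₂₁))⁻¹)) := by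
  classical
  have hσ0 : (0:ℝ) ≤ ∑ i, ∑ j, (A i j)^2 :=
    Finset.sum_nonneg fun i _ => Finset.sum_nonneg fun j _ => sq_nonneg _
  set σ : ℝ := ∑ i, ∑ j, (A i j)^2 with hσdef
  set s11 : ℝ := ∑ i, ∑ j, (A.toBlocks₁₁ i j)^2 with hs11def
  set s12 : ℝ := ∑ i, ∑ j, (A.toBlocks₁₂ i j)^2 with hs12def
  set s21 : ℝ := ∑ i, ∑ j, (A.toBlocks₂₁ i j)^2 with hs21def
  set s22 : ℝ := ∑ i, ∑ j, (A.toBlocks₂₂ i j)^2 with hs22def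
  have hs11_0 : (0:ℝ) ≤ s11 :=
    Finset.sum_nonneg fun i _ => Finset.sum_nonneg fun j _ => sq_nonneg _
  have hs12_0 : (0:ℝ) ≤ s12 :=
    Finset.sum_nonneg fun i _ => Finset.sum_nonneg fun j _ => sq_nonneg _
  have hs21_0 : (0:ℝ) ≤ s21 :=
    Finset.sum_nonneg fun i _ => Finset.sum_nonneg fun j _ => sq_nonneg _
  have hs22_0 : (0:ℝ) ≤ s22 :=
    Finset.sum_nonneg fun i _ => Finset.sum_nonneg fun j _ => sq_nonneg _
  have hdec : σ = s11 + s12 + (s21 + s22) := sum_sq_decomp A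
  have hz2σ : z^2 * σ < 1 := by
    have h1 : (|z| * Real.sqrt σ)^2 < 1 :=
      pow_lt_one₀ (by positivity) hz two_ne_zero
    calc z^2*σ = (|z| * Real.sqrt σ)^2 := by
          rw [mul_pow, sq_abs, Real.sq_sqrt hσ0]
      _ < 1 := h1
  -- the limiting function
  set F : ℝ → Matrix (Fin p) (Fin p) ℝ := fun t =>
    ((1 : Matrix (Fin p) (Fin p) ℝ) - t • A.toBlocks₁₁
      - z^2 • (A.toBlocks₁₂ * ((1 : Matrix (Fin q) (Fin q) ℝ)
          - t • A.toBlocks₂₂)⁻¹ * A.toBlocks₂₁))⁻¹ with hFdef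
  -- eventual equality
  have hev : ∀ n : ℕ, 1 ≤ n →
      (((1 : Matrix (Fin p ⊕ Fin n × Fin q) (Fin p ⊕ Fin n × Fin q) ℝ)
          - (z / Real.sqrt n) • starProductMatrix A n)⁻¹).toBlocks₁₁
        = F (z / Real.sqrt n) := by
    intro n hn
    have hn0 : (0:ℝ) < n := by exact_mod_cast hn
    have hn1 : (1:ℝ) ≤ n := by exact_mod_cast hn
    set t : ℝ := z / Real.sqrt n with ht
    have ht2 : t^2 = z^2 / n := by rw [ht, div_pow, Real.sq_sqrt hn0.le]
    have hnt2 : (n:ℝ) * t^2 = z^2 := by rw [ht2, mul_div_cancel₀ _ (ne_of_gt hn0)]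
    have hE : IsUnit ((1 : Matrix (Fin q) (Fin q) ℝ) - t • A.toBlocks₂₂) := by
      apply isUnit_one_sub_sq
      have hsum : ∑ i, ∑ j, ((t • A.toBlocks₂₂) i j)^2 = t^2 * s22 := by
        simp [Matrix.smul_apply, mul_pow, Finset.mul_sum, hs22def]
      rw [hsum, Real.sqrt_lt' one_pos, one_pow]
      calc t^2 * s22 = (z^2*s22)/n := by rw [ht2]; ring
        _ ≤ z^2*s22 := div_le_self (by positivity) hn1
        _ ≤ z^2*σ := by nlinarith [sq_nonneg z]
        _ < 1 := hz2σ
    have hM : IsUnit ((1 : Matrix (Fin p ⊕ Fin n × Fin q) (Fin p ⊕ Fin n × Fin q) ℝ)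
        - t • starProductMatrix A n) := by
      apply isUnit_one_sub_sq
      have hsum : ∑ r, ∑ c, ((t • starProductMatrix A n) r c)^2
          = t^2 * (s11 + (n:ℝ)*s12 + ((n:ℝ)*s21 + (n:ℝ)*s22)) := by
        simp only [Matrix.smul_apply, smul_eq_mul, mul_pow, ← Finset.mul_sum]
        rw [sum_sq_star A n]
      rw [hsum, Real.sqrt_lt' one_pos, one_pow, ht2]
      have expand : z^2/(n:ℝ) * (s11 + (n:ℝ)*s12 + ((n:ℝ)*s21 + (n:ℝ)*s22))
          = (z^2*s11)/n + (z^2*s12 + (z^2*s21 + z^2*s22)) := by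
        field_simp
        ring
      rw [expand]
      have h1 : (z^2*s11)/n ≤ z^2*s11 := div_le_self (by positivity) hn1
      have : (z^2*s11) + (z^2*s12 + (z^2*s21 + z^2*s22)) = z^2*σ := by rw [hdec]; ring
      linarith [hz2σ]
    rw [star_inv_block A t hE hM, hnt2, hFdef]
  -- continuity at 0
  have e0 : (1 : Matrix (Fin q) (Fin q) ℝ) - (0:ℝ) • A.toBlocks₂₂ = 1 := by simp
  have hG : ContinuousAt (fun t : ℝ =>
      ((1 : Matrix (Fin q) (Fin q) ℝ) - t • A.toBlocks₂₂)⁻¹) 0 := by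
    have hmul : ContinuousAt (fun t : ℝ =>
        (1 : Matrix (Fin q) (Fin q) ℝ) - t • A.toBlocks₂₂) 0 :=
      continuousAt_const.sub (continuousAt_id.smul continuousAt_const)
    have hinv1 : ContinuousAt Inv.inv ((1 : Matrix (Fin q) (Fin q) ℝ)
        - (0:ℝ) • A.toBlocks₂₂) := by
      rw [e0]
      apply continuousAt_matrix_inv
      rw [Matrix.det_one, Ring.inverse_eq_inv']
      exact continuousAt_inv₀ one_ne_zero
    exact ContinuousAt.comp (g := Inv.inv)
      (f := fun t : ℝ => (1 : Matrix (Fin q) (Fin q) ℝ) - t • A.toBlocks₂₂) hinv1 hmul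
  have hH : ContinuousAt (fun t : ℝ =>
      (1 : Matrix (Fin p) (Fin p) ℝ) - t • A.toBlocks₁₁
        - z^2 • (A.toBlocks₁₂ * ((1 : Matrix (Fin q) (Fin q) ℝ)
            - t • A.toBlocks₂₂)⁻¹ * A.toBlocks₂₁)) 0 := by
    have hmulc : ContinuousAt (fun t : ℝ => A.toBlocks₁₂
        * ((1 : Matrix (Fin q) (Fin q) ℝ) - t • A.toBlocks₂₂)⁻¹ * A.toBlocks₂₁) 0 :=
      by
        have hL : Continuous (fun M : Matrix (Fin q) (Fin q) ℝ =>
            A.toBlocks₁₂ * M * A.toBlocks₂₁) :=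
          (continuous_const.matrix_mul continuous_id).matrix_mul continuous_const
        exact ContinuousAt.comp
          (g := fun M : Matrix (Fin q) (Fin q) ℝ => A.toBlocks₁₂ * M * A.toBlocks₂₁)
          (f := fun t : ℝ => ((1 : Matrix (Fin q) (Fin q) ℝ) - t • A.toBlocks₂₂)⁻¹)
          hL.continuousAt hG
    exact (continuousAt_const.sub (continuousAt_id.smul continuousAt_const)).sub
      (hmulc.const_smul (z^2))
  have hunit0 : IsUnit ((1 : Matrix (Fin p) (Fin p) ℝ)
      - z^2 • (A.toBlocks₁₂ * A.toBlocks₂₁)) := by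
    apply isUnit_one_sub_sq
    have hs : ∑ i, ∑ j, ((z^2 • (A.toBlocks₁₂ * A.toBlocks₂₁)) i j)^2
        = (z^2)^2 * ∑ i, ∑ j, ((A.toBlocks₁₂ * A.toBlocks₂₁) i j)^2 := by
      simp [Matrix.smul_apply, mul_pow, Finset.mul_sum]
    rw [hs, Real.sqrt_mul (by positivity), Real.sqrt_sq (sq_nonneg z)]
    have hb := frob_mul_sq A.toBlocks₁₂ A.toBlocks₂₁
    have h12 : Real.sqrt s12 ≤ Real.sqrt σ := Real.sqrt_le_sqrt (by nlinarith)
    have h21 : Real.sqrt s21 ≤ Real.sqrt σ := Real.sqrt_le_sqrt (by nlinarith)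
    calc z^2 * Real.sqrt (∑ i, ∑ j, ((A.toBlocks₁₂ * A.toBlocks₂₁) i j)^2)
        ≤ z^2 * (Real.sqrt s12 * Real.sqrt s21) := by
          apply mul_le_mul_of_nonneg_left _ (sq_nonneg z)
          exact hb
      _ ≤ z^2 * (Real.sqrt σ * Real.sqrt σ) := by
          apply mul_le_mul_of_nonneg_left _ (sq_nonneg z)
          exact mul_le_mul h12 h21 (Real.sqrt_nonneg _) (Real.sqrt_nonneg _)
      _ = z^2 * σ := by rw [Real.mul_self_sqrt hσ0]
      _ < 1 := hz2σ
  have hcontF : ContinuousAt F 0 := by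
    have e1 : ((1 : Matrix (Fin p) (Fin p) ℝ) - (0:ℝ) • A.toBlocks₁₁
        - z^2 • (A.toBlocks₁₂ * ((1 : Matrix (Fin q) (Fin q) ℝ)
            - (0:ℝ) • A.toBlocks₂₂)⁻¹ * A.toBlocks₂₁))
        = (1 : Matrix (Fin p) (Fin p) ℝ) - z^2 • (A.toBlocks₁₂ * A.toBlocks₂₁) := by
      rw [e0]
      simp [inv_one]
    have hdet : ((1 : Matrix (Fin p) (Fin p) ℝ)
        - z^2 • (A.toBlocks₁₂ * A.toBlocks₂₁)).det ≠ 0 :=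
      ((Matrix.isUnit_iff_isUnit_det _).mp hunit0).ne_zero
    have hinvc : ContinuousAt Inv.inv ((1 : Matrix (Fin p) (Fin p) ℝ) - (0:ℝ) • A.toBlocks₁₁
        - z^2 • (A.toBlocks₁₂ * ((1 : Matrix (Fin q) (Fin q) ℝ)
            - (0:ℝ) • A.toBlocks₂₂)⁻¹ * A.toBlocks₂₁)) := by
      rw [e1]
      apply continuousAt_matrix_inv
      rw [Ring.inverse_eq_inv']
      exact continuousAt_inv₀ hdet
    exact ContinuousAt.comp (g := Inv.inv) (f := fun t : ℝ =>
      (1 : Matrix (Fin p) (Fin p) ℝ) - t • A.toBlocks₁₁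
        - z^2 • (A.toBlocks₁₂ * ((1 : Matrix (Fin q) (Fin q) ℝ)
            - t • A.toBlocks₂₂)⁻¹ * A.toBlocks₂₁)) hinvc hH
  have hF0 : F 0 = ((1 : Matrix (Fin p) (Fin p) ℝ)
      - z ^ 2 • (A.toBlocks₁₂ * A.toBlocks₂₁))⁻¹ := by
    rw [hFdef]
    simp [inv_one]
  have hsqrt : Tendsto (fun n : ℕ => Real.sqrt n) atTop atTop := by
    have h1 : Tendsto (fun x : ℝ => x ^ (1/2 : ℝ)) atTop atTop :=
      tendsto_rpow_atTop (by norm_num)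
    have h2 := h1.comp (tendsto_natCast_atTop_atTop (R := ℝ))
    exact h2.congr fun n => by
      rw [Function.comp_apply, ← Real.sqrt_eq_rpow]
  have hlim : Tendsto (fun n : ℕ => z / Real.sqrt n) atTop (nhds 0) :=
    tendsto_const_nhds.div_atTop hsqrt
  have hcomp := hcontF.tendsto.comp hlim
  rw [hF0] at hcomp
  apply Filter.Tendsto.congr' _ hcomp
  filter_upwards [Filter.eventually_ge_atTop 1] with n hn
  exact (hev n hn).symm
end

section
/- With A^{(n)} the star-product matrix of n copies of A merged along u = {1,...,p}, for every real z such that I − zA^{(n)} and I − zA_{ūū} are invertible, the (u,u)-block of the resolvent satisfies the Schur complement formula ((I − z A^{(n)})^{−1})_{uu} = (I − zA_{uu} − n z² A_{uū}(I − zA_{ūū})^{−1} A_{ūu})^{−1}; in particular the matrix on the right-hand side is invertible. -/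
open Matrix BigOperators

namespace StarSchurAux

/-- Block-diagonal expansion of a `q×q` matrix to `Fin n × Fin q`. -/
def expand (n q : ℕ) (C : Matrix (Fin q) (Fin q) ℝ) :
    Matrix (Fin n × Fin q) (Fin n × Fin q) ℝ :=
  Matrix.of fun mj mj' => if mj.1 = mj'.1 then C mj.2 mj'.2 else 0

/-- Row replication. -/
def repR {p q : ℕ} (n : ℕ) (C : Matrix (Fin p) (Fin q) ℝ) : Matrix (Fin p) (Fin n × Fin q) ℝ :=
  Matrix.of fun i mj => C i mj.2

/-- Column replication. -/
def repC {p q : ℕ} (n : ℕ) (C : Matrix (Fin q) (Fin p) ℝ) : Matrix (Fin n × Fin q) (Fin p) ℝ :=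
  Matrix.of fun mj i => C mj.2 i

variable {p q n : ℕ}

lemma expand_mul (C C' : Matrix (Fin q) (Fin q) ℝ) :
    expand n q C * expand n q C' = expand n q (C * C') := by
  ext ⟨m, j⟩ ⟨m', j'⟩
  simp only [expand, Matrix.mul_apply, Matrix.of_apply, Fintype.sum_prod_type, ite_mul, mul_ite,
    zero_mul, mul_zero]
  by_cases h : m = m' <;> simp [h, Finset.sum_ite_eq, Finset.sum_ite_eq']

lemma expand_one : expand n q (1 : Matrix (Fin q) (Fin q) ℝ) = 1 := by
  ext ⟨m, j⟩ ⟨m', j'⟩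
  simp only [expand, Matrix.of_apply, Matrix.one_apply, Prod.mk.injEq]
  by_cases h : m = m' <;> by_cases h' : j = j' <;> simp [h, h']

lemma repR_mul_expand (C : Matrix (Fin p) (Fin q) ℝ) (E : Matrix (Fin q) (Fin q) ℝ) :
    repR n C * expand n q E = repR n (C * E) := by
  ext i ⟨m, j⟩
  simp only [repR, expand, Matrix.mul_apply, Matrix.of_apply, Fintype.sum_prod_type, mul_ite,
    mul_zero]
  simp [Finset.sum_ite_eq, Finset.sum_ite_eq']

lemma repR_mul_repC (C : Matrix (Fin p) (Fin q) ℝ) (C' : Matrix (Fin q) (Fin p) ℝ) :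
    repR n C * repC n C' = (n : ℝ) • (C * C') := by
  ext i i'
  simp only [repR, repC, Matrix.mul_apply, Matrix.of_apply, Fintype.sum_prod_type,
    Matrix.smul_apply, smul_eq_mul]
  simp [Finset.sum_const, nsmul_eq_mul]

end StarSchurAux

/-- Schur complement formula for the `(u,u)`-block of the resolvent of the star-product
matrix: `((I − z A^{(n)})^{-1})_{uu} = (I − zA_{uu} − n z² A_{uū}(I − zA_{ūū})^{-1} A_{ūu})^{-1}`,
and in particular the matrix on the right-hand side is invertible. -/
theorem star_graph_resolvent_schur (p q : ℕ) (hp : 1 ≤ p) (hq : 1 ≤ q)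
    (A : Matrix (Fin p ⊕ Fin q) (Fin p ⊕ Fin q) ℝ) (hsymm : Aᵀ = A)
    (n : ℕ) (z : ℝ)
    (h1 : IsUnit ((1 : Matrix (Fin p ⊕ Fin n × Fin q) (Fin p ⊕ Fin n × Fin q) ℝ)
        - z • starProductMatrix A n).det)
    (h2 : IsUnit ((1 : Matrix (Fin q) (Fin q) ℝ) - z • A.toBlocks₂₂).det) :
    IsUnit ((1 : Matrix (Fin p) (Fin p) ℝ) - z • A.toBlocks₁₁
        - ((n : ℝ) * z ^ 2) •
          (A.toBlocks₁₂ * ((1 : Matrix (Fin q) (Fin q) ℝ) - z • A.toBlocks₂₂)⁻¹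
            * A.toBlocks₂₁)).det ∧
    (((1 : Matrix (Fin p ⊕ Fin n × Fin q) (Fin p ⊕ Fin n × Fin q) ℝ)
        - z • starProductMatrix A n)⁻¹).toBlocks₁₁
      = ((1 : Matrix (Fin p) (Fin p) ℝ) - z • A.toBlocks₁₁
          - ((n : ℝ) * z ^ 2) •
            (A.toBlocks₁₂ * ((1 : Matrix (Fin q) (Fin q) ℝ) - z • A.toBlocks₂₂)⁻¹
              * A.toBlocks₂₁))⁻¹ := by
    classical
  open StarSchurAux in
  set B : Matrix (Fin q) (Fin q) ℝ := 1 - z • A.toBlocks₂₂ with hBdef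
  letI iB : Invertible B := B.invertibleOfIsUnitDet h2
  set M : Matrix (Fin p ⊕ Fin n × Fin q) (Fin p ⊕ Fin n × Fin q) ℝ :=
    1 - z • starProductMatrix A n with hMdef
  letI iM : Invertible M := M.invertibleOfIsUnitDet h1
  set X : Matrix (Fin p) (Fin p) ℝ := 1 - z • A.toBlocks₁₁ with hXdef
  set Y : Matrix (Fin p) (Fin n × Fin q) ℝ := StarSchurAux.repR n ((-z) • A.toBlocks₁₂) with hYdef
  set W : Matrix (Fin n × Fin q) (Fin p) ℝ := StarSchurAux.repC n ((-z) • A.toBlocks₂₁) with hWdef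
  set D : Matrix (Fin n × Fin q) (Fin n × Fin q) ℝ := StarSchurAux.expand n q B with hDdef
  have hM : M = Matrix.fromBlocks X Y W D := by
    ext r c
    rcases r with i | ⟨m, j⟩ <;> rcases c with i' | ⟨m', j'⟩
    · simp [hMdef, hXdef, starProductMatrix, Matrix.one_apply, Matrix.toBlocks₁₁]
    · simp [hMdef, hYdef, starProductMatrix, StarSchurAux.repR, Matrix.one_apply,
        Matrix.toBlocks₁₂, mul_comm]
    · simp [hMdef, hWdef, starProductMatrix, StarSchurAux.repC, Matrix.one_apply,
        Matrix.toBlocks₂₁, mul_comm]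
    · by_cases h : m = m' <;>
        simp [hMdef, hDdef, hBdef, starProductMatrix, StarSchurAux.expand, Matrix.one_apply,
          Matrix.toBlocks₂₂, h, Prod.ext_iff]
  letI iD : Invertible D :=
    ⟨StarSchurAux.expand n q (⅟B),
      by rw [hDdef, StarSchurAux.expand_mul, invOf_mul_self, StarSchurAux.expand_one],
      by rw [hDdef, StarSchurAux.expand_mul, mul_invOf_self, StarSchurAux.expand_one]⟩
  have hinvD : ⅟D = StarSchurAux.expand n q (⅟B) := rfl
  have hSchur : X - Y * ⅟D * W
      = (1 : Matrix (Fin p) (Fin p) ℝ) - z • A.toBlocks₁₁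
        - ((n : ℝ) * z ^ 2) • (A.toBlocks₁₂ * B⁻¹ * A.toBlocks₂₁) := by
    rw [hinvD, hYdef, hWdef, StarSchurAux.repR_mul_expand, StarSchurAux.repR_mul_repC, hXdef,
      invOf_eq_nonsing_inv]
    congr 1
    rw [Matrix.smul_mul, Matrix.smul_mul, Matrix.mul_smul, smul_smul, smul_smul]
    ring_nf
  letI iFB : Invertible (Matrix.fromBlocks X Y W D) := iM.copy _ hM.symm
  letI iS : Invertible (X - Y * ⅟D * W) :=
    Matrix.invertibleOfFromBlocks₂₂Invertible X Y W D
  have hTinv : Invertible ((1 : Matrix (Fin p) (Fin p) ℝ) - z • A.toBlocks₁₁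
      - ((n : ℝ) * z ^ 2) • (A.toBlocks₁₂ * B⁻¹ * A.toBlocks₂₁)) := iS.copy _ hSchur.symm
  letI := hTinv
  refine ⟨Matrix.isUnit_det_of_invertible _, ?_⟩
  have hMinv : M⁻¹ = Matrix.fromBlocks
      (⅟(X - Y * ⅟D * W)) (-(⅟(X - Y * ⅟D * W) * Y * ⅟D))
      (-(⅟D * W * ⅟(X - Y * ⅟D * W))) (⅟D + ⅟D * W * ⅟(X - Y * ⅟D * W) * Y * ⅟D) := by
    rw [hM, ← invOf_eq_nonsing_inv, Matrix.invOf_fromBlocks₂₂_eq]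
  rw [hMinv, Matrix.toBlocks_fromBlocks₁₁, invOf_eq_nonsing_inv, hSchur]
end

section
/- The joint spectral measure does not depend on the choice of eigendecomposition: if A = PΛPᵀ = QΛQᵀ are two eigendecompositions of a real symmetric N×N matrix A with P, Q orthogonal and det(P) = det(Q) = 1, then for every σ ∈ S_N, ∑_{τ∈S_N : λ_τ = λ_σ} ε(τ) ∏_{j=1}^N p_{jτ(j)} = ∑_{τ∈S_N : λ_τ = λ_σ} ε(τ) ∏_{j=1}^N q_{jτ(j)}, where λ_τ := (λ_{τ(1)},...,λ_{τ(N)}) and the condition λ_τ = λ_σ means λ_{τ(j)} = λ_{σ(j)} for all j. -/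
open Matrix BigOperators

noncomputable def specMask (N : ℕ) (lam : Fin N → ℝ) (σ : Equiv.Perm (Fin N))
    (M : Matrix (Fin N) (Fin N) ℝ) : Matrix (Fin N) (Fin N) ℝ :=
  Matrix.of fun j k => if lam k = lam (σ j) then M j k else 0

lemma specMask_sum (N : ℕ) (lam : Fin N → ℝ) (σ : Equiv.Perm (Fin N))
    (M : Matrix (Fin N) (Fin N) ℝ) :
    ∑ τ ∈ Finset.univ.filter
        (fun τ : Equiv.Perm (Fin N) => ∀ j : Fin N, lam (τ j) = lam (σ j)),
        ((Equiv.Perm.sign τ : ℤ) : ℝ) * ∏ j : Fin N, M j (τ j)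
      = (specMask N lam σ M)ᵀ.det := by
  rw [Matrix.det_apply', Finset.sum_filter]
  refine Finset.sum_congr rfl fun τ _ => ?_
  have hmt : ∀ i, (specMask N lam σ M)ᵀ (τ i) i
      = if lam (τ i) = lam (σ i) then M i (τ i) else 0 := fun i => rfl
  by_cases h : ∀ j : Fin N, lam (τ j) = lam (σ j)
  · rw [if_pos h]
    congr 1
    exact Finset.prod_congr rfl fun i _ => by rw [hmt, if_pos (h i)]
  · rw [if_neg h]
    push_neg at h
    obtain ⟨j, hj⟩ := h
    have : ∏ i, (specMask N lam σ M)ᵀ (τ i) i = 0 :=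
      Finset.prod_eq_zero (Finset.mem_univ j) (by rw [hmt, if_neg hj])
    rw [this, mul_zero]

/-- The joint spectral measure does not depend on the choice of eigendecomposition:
if `A = PΛPᵀ = QΛQᵀ` with `P, Q` orthogonal of determinant one, then for every
permutation `σ`, `∑_{τ : λ_τ = λ_σ} ε(τ) ∏_j p_{jτ(j)} = ∑_{τ : λ_τ = λ_σ} ε(τ) ∏_j q_{jτ(j)}`. -/
theorem joint_spectral_measure_basis_independent (N : ℕ)
    (A P Q : Matrix (Fin N) (Fin N) ℝ) (lam : Fin N → ℝ)
    (hsymm : A.IsSymm)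
    (hP : A = P * Matrix.diagonal lam * Pᵀ)
    (hQ : A = Q * Matrix.diagonal lam * Qᵀ)
    (horthP : P * Pᵀ = 1) (horthQ : Q * Qᵀ = 1)
    (hdetP : P.det = 1) (hdetQ : Q.det = 1)
    (σ : Equiv.Perm (Fin N)) :
    ∑ τ ∈ Finset.univ.filter
        (fun τ : Equiv.Perm (Fin N) => ∀ j : Fin N, lam (τ j) = lam (σ j)),
        ((Equiv.Perm.sign τ : ℤ) : ℝ) * ∏ j : Fin N, P j (τ j)
      = ∑ τ ∈ Finset.univ.filter
          (fun τ : Equiv.Perm (Fin N) => ∀ j : Fin N, lam (τ j) = lam (σ j)),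
          ((Equiv.Perm.sign τ : ℤ) : ℝ) * ∏ j : Fin N, Q j (τ j) := by
  set D := Matrix.diagonal lam with hD
  set R := Qᵀ * P with hRdef
  have h1 : Pᵀ * P = 1 := mul_eq_one_comm.mp horthP
  have h2 : Qᵀ * Q = 1 := mul_eq_one_comm.mp horthQ
  have key : P * D * Pᵀ = Q * D * Qᵀ := hP.symm.trans hQ
  -- P = Q * R
  have hPQR : P = Q * R := by
    rw [hRdef, ← Matrix.mul_assoc, horthQ, Matrix.one_mul]
  -- commutation
  have hcomm : R * D = D * R := by
    have := congrArg (fun X => Qᵀ * X * P) key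
    simp only [Matrix.mul_assoc] at this
    calc R * D = Qᵀ * (P * D) := by rw [hRdef, Matrix.mul_assoc]
    _ = Qᵀ * (P * (D * (Pᵀ * P))) := by rw [h1, Matrix.mul_one]
    _ = Qᵀ * (Q * (D * (Qᵀ * P))) := this
    _ = (Qᵀ * Q) * (D * (Qᵀ * P)) := by rw [Matrix.mul_assoc]
    _ = D * R := by rw [h2, Matrix.one_mul, hRdef]
  have hR : ∀ i j, R i j ≠ 0 → lam i = lam j := by
    intro i j hij
    have this : (R * D) i j = (D * R) i j := by rw [hcomm]
    rw [hD, Matrix.mul_diagonal, Matrix.diagonal_mul] at this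
    have h4 : R i j * (lam j - lam i) = 0 := by
      rw [mul_sub]
      rw [mul_comm (lam i)] at this
      linarith
    rcases mul_eq_zero.mp h4 with h | h
    · exact absurd h hij
    · linarith [sub_eq_zero.mp h]
  have hdetR : R.det = 1 := by
    rw [hRdef, Matrix.det_mul, Matrix.det_transpose, hdetQ, hdetP, one_mul]
  have hBmul : specMask N lam σ P = specMask N lam σ Q * R := by
    ext j k
    simp only [specMask, Matrix.mul_apply, Matrix.of_apply]
    by_cases hk : lam k = lam (σ j)
    · rw [if_pos hk]
      have : P j k = ∑ m, Q j m * R m k := by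
        rw [hPQR]; rfl
      rw [this]
      refine Finset.sum_congr rfl fun m _ => ?_
      by_cases hm : lam m = lam (σ j)
      · rw [if_pos hm]
      · rw [if_neg hm]
        have : R m k = 0 := by
          by_contra hc
          exact hm ((hR m k hc).trans hk)
        rw [this, mul_zero, zero_mul]
    · rw [if_neg hk]
      symm
      refine Finset.sum_eq_zero fun m _ => ?_
      by_cases hm : lam m = lam (σ j)
      · have : R m k = 0 := by
          by_contra hc
          exact hk ((hR m k hc).symm.trans hm)
        rw [this, mul_zero]
      · rw [if_neg hm, zero_mul]
  rw [specMask_sum, specMask_sum, Matrix.det_transpose, Matrix.det_transpose,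
    hBmul, Matrix.det_mul, hdetR, mul_one]
end

section
/- Let P be an N×N real orthogonal matrix with det(P) = 1, let s = {s₁,...,s_k} and t = {t₁,...,t_k} be two k-element subsets of {1,...,N} (with fixed enumerations), and let σ be a permutation of {1,...,k}. Then ∑_{τ∈S_N : τ(s_j) = t_{σ(j)} ∀j=1,...,k} ε(τ) ∏_{j=1}^N p_{jτ(j)} = ε(σ) · det(P_{st}) · ∏_{j=1}^k p_{s_j t_{σ(j)}}, where P_{st} is the k×k submatrix of P with rows s₁,...,s_k and columns t₁,...,t_k (in those orders). When P diagonalizes a symmetric matrix A with distinct eigenvalues, the left-hand side is the joint probability ℙ(X_{s₁} = λ_{t_{σ(1)}}, ..., X_{s_k} = λ_{t_{σ(k)}}) under the joint spectral measure. -/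
/-!
Prescribing `τ (s j) = t (σ j)` factors `∏_{j ∈ s} p_{j τ(j)}` out of every term, so the left-hand
side is `(∏ j, p_{s_j t_{σ j}}) · det Q`, where `Q` is `P` with row `s j` replaced by the unit row
`e_{t (σ j)}`. As `P Pᵀ = 1`, the matrix `Q Pᵀ` agrees with the identity off the rows `s j`, and
its row `s j` is column `t (σ j)` of `P`; hence `det (Q Pᵀ)` is the minor
`det P_{s, t ∘ σ} = ε(σ) det P_{st}`, while `det (Q Pᵀ) = det Q` because `det P = 1`.
-/

open Matrix

namespace Matrix

variable {κ m n o α R : Type*}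

/-- `A` with row `s j` replaced by row `j` of `B`; meaningful when `s` is injective. -/
noncomputable def spliceRows (A : Matrix m n α) (s : κ → m) (B : Matrix κ n α) : Matrix m n α :=
  of (Function.extend s B A)

section Apply

variable (A : Matrix m n α) {s : κ → m} (B : Matrix κ n α)

@[simp]
theorem spliceRows_apply_self (hs : Function.Injective s) (j : κ) :
    spliceRows A s B (s j) = B j :=
  hs.extend_apply B A j

theorem spliceRows_apply_of_notMem_range {i : m} (hi : i ∉ Set.range s) :
    spliceRows A s B i = A i :=
  Function.extend_apply' B A i hi

end Apply

theorem spliceRows_mul [Fintype n] [NonUnitalNonAssocSemiring α] (A : Matrix m n α) (s : κ → m)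
    (B : Matrix κ n α) (C : Matrix n o α) :
    spliceRows A s B * C = spliceRows (A * C) s (B * C) := by
  ext i l
  exact congrFun (Function.apply_extend (fun r => r ᵥ* C) s A i) l

theorem prod_spliceRows_apply [Fintype κ] [Fintype m] [DecidableEq m] [CommMonoid α]
    {s : κ → m} (hs : Function.Injective s) (A : Matrix m n α) (B : Matrix κ n α) (τ : m → n) :
    ∏ i, spliceRows A s B i (τ i) =
      (∏ j, B j (τ (s j))) * ∏ i ∈ (Finset.univ.map ⟨s, hs⟩)ᶜ, A i (τ i) := by
  rw [← Finset.prod_mul_prod_compl (Finset.univ.map ⟨s, hs⟩), Finset.prod_map]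
  congr 1
  · simp [spliceRows_apply_self _ _ hs]
  · refine Finset.prod_congr rfl fun i hi => ?_
    rw [spliceRows_apply_of_notMem_range]
    simpa using hi

theorem prod_spliceRows_single_apply_mul [Fintype κ] [Fintype m] [DecidableEq m] [DecidableEq n]
    [CommMonoidWithZero R] {s : κ → m} (hs : Function.Injective s) (A : Matrix m n R)
    (u : κ → n) (τ : m → n) :
    (∏ i, spliceRows A s (of fun j => Pi.single (u j) 1) i (τ i)) * ∏ j, A (s j) (u j) =
      if ∀ j, τ (s j) = u j then ∏ i, A i (τ i) else 0 := by
  rw [prod_spliceRows_apply hs]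
  simp only [of_apply, Pi.single_apply, Finset.prod_boole, Finset.mem_univ, true_imp_iff]
  split_ifs with hτ
  · rw [← Finset.prod_mul_prod_compl (Finset.univ.map ⟨s, hs⟩), Finset.prod_map, one_mul,
      mul_comm]
    simp only [Function.Embedding.coeFn_mk, hτ]
  · rw [zero_mul, zero_mul]

theorem sum_filter_sign_mul_prod_eq_mul_det_spliceRows [Fintype κ] [Fintype n] [DecidableEq n]
    [CommRing R] {s : κ → n} (hs : Function.Injective s) (A : Matrix n n R) (u : κ → n)
    [DecidablePred fun τ : Equiv.Perm n => ∀ j, τ (s j) = u j] :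
    ∑ τ ∈ Finset.univ.filter (fun τ : Equiv.Perm n => ∀ j, τ (s j) = u j),
        ((Equiv.Perm.sign τ : ℤ) : R) * ∏ i, A i (τ i) =
      (∏ j, A (s j) (u j)) * (spliceRows A s (of fun j => Pi.single (u j) 1)).det := by
  rw [← det_transpose, det_apply', Finset.mul_sum, Finset.sum_filter]
  refine Finset.sum_congr rfl fun τ _ => ?_
  simp only [transpose_apply]
  rw [mul_left_comm, mul_comm (∏ j, A (s j) (u j)), prod_spliceRows_single_apply_mul hs]
  split_ifs <;> simp

theorem det_spliceRows_one [Fintype κ] [DecidableEq κ] [Fintype n] [DecidableEq n] [CommRing R]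
    {s : κ → n} (hs : Function.Injective s) (B : Matrix κ n R) :
    (spliceRows 1 s B).det = (B.submatrix id s).det := by
  have hoff : ∀ i, i ∉ Set.range s → ∀ j, j ∈ Set.range s → spliceRows 1 s B i j = 0 := by
    rintro i hi j ⟨j, rfl⟩
    rw [spliceRows_apply_of_notMem_range _ _ hi, one_apply_ne]
    rintro rfl
    exact hi ⟨j, rfl⟩
  have hcompl : toSquareBlockProp (spliceRows 1 s B) (· ∉ Set.range s) = 1 := by
    ext i l
    simp only [toSquareBlockProp, toBlock_apply, spliceRows_apply_of_notMem_range _ _ i.2,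
      one_apply, Subtype.ext_iff]
  have hrange : (toSquareBlockProp (spliceRows 1 s B) (· ∈ Set.range s)).submatrix
      (Equiv.ofInjective s hs) (Equiv.ofInjective s hs) = B.submatrix id s := by
    ext j l
    simp [toSquareBlockProp, hs]
  rw [twoBlockTriangular_det _ (fun i => i ∈ Set.range s) hoff, hcompl, det_one, mul_one, ← hrange]
  convert (det_submatrix_equiv_self (Equiv.ofInjective s hs) _).symm

end Matrix

theorem multivariate_marginal_general (N k : ℕ)
    (P : Matrix (Fin N) (Fin N) ℝ)
    (horth : P * Pᵀ = 1)
    (hdet : P.det = 1)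
    (s t : Fin k → Fin N)
    (hs : Function.Injective s)
    (σ : Equiv.Perm (Fin k)) :
    ∑ τ ∈ Finset.univ.filter
        (fun τ : Equiv.Perm (Fin N) => ∀ j : Fin k, τ (s j) = t (σ j)),
        ((Equiv.Perm.sign τ : ℤ) : ℝ) * ∏ j : Fin N, P j (τ j)
      = ((Equiv.Perm.sign σ : ℤ) : ℝ) * Matrix.det (P.submatrix s t) *
          ∏ j : Fin k, P (s j) (t (σ j)) := by
  set Q := spliceRows P s (of fun j => Pi.single (t (σ j)) (1 : ℝ))
  have hQ : Q * Pᵀ = spliceRows 1 s (Pᵀ.submatrix (t ∘ σ) id) := by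
    rw [spliceRows_mul, horth]
    congr 1
    ext j l
    simp [mul_apply, Pi.single_apply]
  have hdetQ : Q.det = (Q * Pᵀ).det := by rw [det_mul, det_transpose, hdet, mul_one]
  have hminor : ((Pᵀ.submatrix (t ∘ σ) id).submatrix id s).det =
      Equiv.Perm.sign σ * (P.submatrix s t).det := by
    rw [submatrix_submatrix, ← transpose_submatrix, det_transpose, ← det_permute']
    rfl
  rw [sum_filter_sign_mul_prod_eq_mul_det_spliceRows hs P (fun j => t (σ j)), hdetQ, hQ,
    det_spliceRows_one hs, hminor, mul_comm]

/-- Multivariate marginal distributions of the joint spectral measure: for an orthogonal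
matrix `P` with `det(P) = 1`, subsets `s = {s₁,...,s_k}` and `t = {t₁,...,t_k}` (given by
injective enumerations), and a permutation `σ` of `{1,...,k}`,
`∑_{τ : τ(s_j) = t_{σ(j)} ∀j} ε(τ) ∏_j p_{jτ(j)} = ε(σ) det(P_{st}) ∏_j p_{s_j t_{σ(j)}}`. -/
theorem multivariate_marginal (N k : ℕ)
    (P : Matrix (Fin N) (Fin N) ℝ)
    (horth : P * Pᵀ = 1)
    (hdet : P.det = 1)
    (s t : Fin k → Fin N)
    (hs : Function.Injective s) (ht : Function.Injective t)
    (σ : Equiv.Perm (Fin k)) :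
    ∑ τ ∈ Finset.univ.filter
        (fun τ : Equiv.Perm (Fin N) => ∀ j : Fin k, τ (s j) = t (σ j)),
        ((Equiv.Perm.sign τ : ℤ) : ℝ) * ∏ j : Fin N, P j (τ j)
      = ((Equiv.Perm.sign σ : ℤ) : ℝ) * Matrix.det (P.submatrix s t) *
          ∏ j : Fin k, P (s j) (t (σ j)) :=
  multivariate_marginal_general N k P horth hdet s t hs σ
end
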